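/- arXiv:2405.19306 — 3 statements merged into one kernel-verified Lean document; each statement's English description precedes it below -/
import Mathlib

section
/- (Efron–Stein inequality via Glauber calculus) Let Z₁,...,Z_N be i.i.d. random variables, and let X ∈ L² be σ(Z₁,...,Z_N)-measurable. With D_j X := X - E[X | (Z_i)_{i≠j}], one has Var[X] ≤ Σ_{j=1}^N E[|D_j X|²]. -/
open MeasureTheory

/-- The σ-algebra generated by all coordinates except the `j`-th one, on the canonical
space `Fin N → E` of `N` i.i.d. random variables. -/
def glauberSigma {E : Type*} [MeasurableSpace E] {N : ℕ} (j : Fin N) :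
    MeasurableSpace (Fin N → E) :=
  MeasurableSpace.comap (fun ω => fun i : {i : Fin N // i ≠ j} => ω i.1) inferInstance

/-- The Glauber derivative `D_j X := X - E[X | (Z_i)_{i ≠ j}]`. -/
noncomputable def glauberD {E : Type*} [MeasurableSpace E] (ν : Measure E) {N : ℕ}
    (j : Fin N) (X : (Fin N → E) → ℝ) : (Fin N → E) → ℝ :=
  fun ω => X ω - ((Measure.pi fun _ : Fin N => ν)[X|glauberSigma j]) ω

open ProbabilityTheory

section L2Aux

variable {α : Type*} {m m0 : MeasurableSpace α} {μ : Measure α}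

/-- Product of two L² functions is integrable. -/
lemma integrable_mul_L2 [IsFiniteMeasure μ] {f g : α → ℝ}
    (hf : MemLp f 2 μ) (hg : MemLp g 2 μ) : Integrable (fun x => f x * g x) μ := by
  have h := L2.integrable_inner (𝕜 := ℝ) (hf.toLp f) (hg.toLp g)
  refine h.congr ?_
  filter_upwards [hf.coeFn_toLp, hg.coeFn_toLp] with x h1 h2
  simp [h1, h2, RCLike.inner_apply, starRingEnd_apply, star_trivial, mul_comm]

/-- The conditional expectation of an L² function is in L². -/
lemma memL2_condexp [IsFiniteMeasure μ] (hm : m ≤ m0) {g : α → ℝ} (hg : MemLp g 2 μ) :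
    MemLp (μ[g|m]) 2 μ := by
  have heq : μ[g|m] =ᵐ[μ] (condExpL2 ℝ ℝ hm (hg.toLp g) : α → ℝ) := by
    refine (ae_eq_condExp_of_forall_setIntegral_eq hm (hg.integrable one_le_two) ?_ ?_ ?_).symm
    · intro s _ _
      exact (integrable_condExpL2_of_isFiniteMeasure hm).integrableOn
    · intro s hs hμs
      rw [integral_condExpL2_eq hm (hg.toLp g) hs hμs.ne]
      exact setIntegral_congr_ae (hm s hs) (hg.coeFn_toLp.mono fun x hx _ => hx)
    · exact aestronglyMeasurable_condExpL2 hm _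
  exact (Lp.memLp _).ae_eq heq.symm

lemma integral_condexp_mul_self [IsProbabilityMeasure μ] (hm : m ≤ m0) {g : α → ℝ}
    (hg : MemLp g 2 μ) :
    ∫ x, (μ[g|m]) x * g x ∂μ = ∫ x, (μ[g|m]) x * (μ[g|m]) x ∂μ := by
  have hgi : Integrable g μ := hg.integrable one_le_two
  have hc2 : MemLp (μ[g|m]) 2 μ := memL2_condexp hm hg
  have hmul : Integrable (μ[g|m] * g) μ := by
    have := integrable_mul_L2 hc2 hg
    exact this
  have hpull : μ[μ[g|m] * g|m] =ᵐ[μ] μ[g|m] * μ[g|m] :=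
    condExp_mul_of_stronglyMeasurable_left stronglyMeasurable_condExp hmul hgi
  calc ∫ x, (μ[g|m]) x * g x ∂μ = ∫ x, (μ[(μ[g|m] * g)|m]) x ∂μ := by
        rw [integral_condExp hm]; rfl
    _ = ∫ x, (μ[g|m]) x * (μ[g|m]) x ∂μ := by
        refine integral_congr_ae (hpull.mono fun x hx => ?_)
        simpa using hx

/-- Pythagoras / energy identity for conditional expectation. -/
lemma energy_condexp [IsProbabilityMeasure μ] (hm : m ≤ m0) {g : α → ℝ} (hg : MemLp g 2 μ) :
    ∫ x, (g x) ^ 2 ∂μ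
      = ∫ x, ((μ[g|m]) x) ^ 2 ∂μ + ∫ x, (g x - (μ[g|m]) x) ^ 2 ∂μ := by
  set c := μ[g|m] with hc
  have hc2 : MemLp c 2 μ := memL2_condexp hm hg
  have h1 : Integrable (fun x => g x * g x) μ := integrable_mul_L2 hg hg
  have h2 : Integrable (fun x => c x * g x) μ := integrable_mul_L2 hc2 hg
  have h3 : Integrable (fun x => c x * c x) μ := integrable_mul_L2 hc2 hc2
  have key : ∫ x, c x * g x ∂μ = ∫ x, c x * c x ∂μ := integral_condexp_mul_self hm hg
  have expand : (fun x => (g x - c x) ^ 2)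
      = fun x => (g x * g x - 2 * (c x * g x)) + c x * c x := by
    funext x; ring
  have e1 : ∫ x, (g x - c x) ^ 2 ∂μ
      = (∫ x, g x * g x ∂μ - 2 * ∫ x, c x * g x ∂μ) + ∫ x, c x * c x ∂μ := by
    rw [expand]
    rw [integral_add ((h1.sub (h2.const_mul 2)).congr (by filter_upwards with x; simp)) h3,
      integral_sub h1 (h2.const_mul 2), integral_const_mul]
  have e2 : ∫ x, (g x) ^ 2 ∂μ = ∫ x, g x * g x ∂μ := by simp [pow_two]
  have e3 : ∫ x, (c x) ^ 2 ∂μ = ∫ x, c x * c x ∂μ := by simp [pow_two]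
  rw [e1, e2, e3, key]; ring

lemma integral_sq_condexp_le [IsProbabilityMeasure μ] (hm : m ≤ m0) {g : α → ℝ}
    (hg : MemLp g 2 μ) :
    ∫ x, ((μ[g|m]) x) ^ 2 ∂μ ≤ ∫ x, (g x) ^ 2 ∂μ := by
  rw [energy_condexp hm hg]
  have : 0 ≤ ∫ x, (g x - (μ[g|m]) x) ^ 2 ∂μ := integral_nonneg fun x => sq_nonneg _
  linarith

end L2Aux

section IndepCondexp

variable {α : Type*}

lemma indep_mono {m1 m2 m1' m2' m0 : MeasurableSpace α} {μ : Measure α}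
    (h : Indep m1 m2 μ) (h1 : m1' ≤ m1) (h2 : m2' ≤ m2) : Indep m1' m2' μ := by
  rw [Indep_iff] at h ⊢
  exact fun t1 t2 ht1 ht2 => h t1 t2 (h1 _ ht1) (h2 _ ht2)

/-- If `m₂ ≤ m₁`, `m₃` is independent of `m₁`, and `f` is `m₁`-measurable, then conditioning
on `m₂ ⊔ m₃` is the same as conditioning on `m₂`. -/
lemma condexp_sup_of_indep {m1 m2 m3 m0 : MeasurableSpace α} {μ : Measure α}
    [IsProbabilityMeasure μ]
    (hm1 : m1 ≤ m0) (hm2 : m2 ≤ m0) (hm3 : m3 ≤ m0) (h21 : m2 ≤ m1)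
    (hind : Indep m1 m3 μ) {f : α → ℝ} (hfm : StronglyMeasurable[m1] f)
    (hf : Integrable f μ) :
    μ[f|m2 ⊔ m3] =ᵐ[μ] μ[f|m2] := by
  have hm23 : m2 ⊔ m3 ≤ m0 := sup_le hm2 hm3
  -- the π-system of intersections
  set P : Set (Set α) := {s | ∃ A B, MeasurableSet[m2] A ∧ MeasurableSet[m3] B ∧ s = A ∩ B}
    with hP
  have h_gen : m2 ⊔ m3 = MeasurableSpace.generateFrom P := by
    refine le_antisymm (sup_le ?_ ?_) (MeasurableSpace.generateFrom_le ?_)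
    · intro s hs
      exact MeasurableSpace.measurableSet_generateFrom
        ⟨s, Set.univ, hs, MeasurableSet.univ, (Set.inter_univ s).symm⟩
    · intro s hs
      exact MeasurableSpace.measurableSet_generateFrom
        ⟨Set.univ, s, MeasurableSet.univ, hs, (Set.univ_inter s).symm⟩
    · rintro s ⟨A, B, hA, hB, rfl⟩
      exact ((le_sup_left : m2 ≤ m2 ⊔ m3) _ hA).inter ((le_sup_right : m3 ≤ m2 ⊔ m3) _ hB)
  have hpi : IsPiSystem P := by
    rintro s ⟨A, B, hA, hB, rfl⟩ t ⟨A', B', hA', hB', rfl⟩ -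
    refine ⟨A ∩ A', B ∩ B', hA.inter hA', hB.inter hB', ?_⟩
    ext x; simp only [Set.mem_inter_iff]; tauto
  -- main computation on product sets
  have main : ∀ (h : α → ℝ), StronglyMeasurable[m1] h → Integrable h μ →
      ∀ A B, MeasurableSet[m2] A → MeasurableSet[m3] B →
      ∫ x in A ∩ B, h x ∂μ = (∫ x in A, h x ∂μ) * (μ B).toReal := by
    intro h hmeas hint A B hA hB
    have hAm0 : MeasurableSet A := hm2 _ hA
    have hBm0 : MeasurableSet B := hm3 _ hB
    have e1 : ∫ x in A ∩ B, h x ∂μ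
        = ∫ x, (A.indicator h x) * (B.indicator (fun _ => (1 : ℝ)) x) ∂μ := by
      rw [← integral_indicator (hAm0.inter hBm0)]
      refine integral_congr_ae (Filter.Eventually.of_forall fun x => ?_)
      by_cases hxA : x ∈ A <;> by_cases hxB : x ∈ B <;>
        simp [Set.indicator_apply, hxA, hxB]
    have hmeas1 : Measurable[m1] (A.indicator h) :=
      (hmeas.indicator (h21 _ hA)).measurable
    have hmeas3 : Measurable[m3] (B.indicator (fun _ => (1 : ℝ))) :=
      measurable_const.indicator hB
    have hind' : IndepFun (A.indicator h) (B.indicator (fun _ => (1 : ℝ))) μ := by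
      rw [IndepFun_iff_Indep]
      exact indep_mono hind (measurable_iff_comap_le.1 hmeas1)
        (measurable_iff_comap_le.1 hmeas3)
    have e2 : ∫ x, (A.indicator h x) * (B.indicator (fun _ => (1 : ℝ)) x) ∂μ
        = (∫ x, A.indicator h x ∂μ) * ∫ x, B.indicator (fun _ => (1 : ℝ)) x ∂μ :=
      hind'.integral_fun_mul_eq_mul_integral (hint.indicator hAm0).aestronglyMeasurable
        ((integrable_const (1 : ℝ)).indicator hBm0).aestronglyMeasurable
    rw [e1, e2, integral_indicator hAm0, integral_indicator_const (1 : ℝ) hBm0]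
    simp [mul_comm]
    rw [measureReal_def, mul_comm]
  -- the set-integral equality on all of m2 ⊔ m3
  have key : ∀ s, MeasurableSet[m2 ⊔ m3] s →
      ∫ x in s, (μ[f|m2]) x ∂μ = ∫ x in s, f x ∂μ := by
    have hcm : StronglyMeasurable[m1] (μ[f|m2]) :=
      stronglyMeasurable_condExp.mono h21
    have hci : Integrable (μ[f|m2]) μ := integrable_condExp
    intro s hs
    refine @MeasurableSpace.induction_on_inter α (m2 ⊔ m3)
      (fun s _ => ∫ x in s, (μ[f|m2]) x ∂μ = ∫ x in s, f x ∂μ) P h_gen hpi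
      ?_ ?_ ?_ ?_ s hs
    · simp
    · rintro t ⟨A, B, hA, hB, rfl⟩
      rw [main _ hcm hci A B hA hB, main _ hfm hf A B hA hB,
        setIntegral_condExp hm2 hf hA]
    · intro t htm ht
      have h1 := integral_add_compl (hm23 _ htm) hci
      have h2 := integral_add_compl (hm23 _ htm) hf
      have h3 : ∫ x, (μ[f|m2]) x ∂μ = ∫ x, f x ∂μ := integral_condExp hm2
      linarith
    · intro g hdisj hmeas hIH
      rw [integral_iUnion (fun i => hm23 _ (hmeas i)) hdisj hci.integrableOn,
        integral_iUnion (fun i => hm23 _ (hmeas i)) hdisj hf.integrableOn]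
      exact tsum_congr hIH
  refine (ae_eq_condExp_of_forall_setIntegral_eq hm23 hf
    (fun s _ _ => integrable_condExp.integrableOn)
    (fun s hs _ => key s hs) ?_).symm
  exact (stronglyMeasurable_condExp.mono (le_sup_left : m2 ≤ m2 ⊔ m3)).aestronglyMeasurable

end IndepCondexp


section ProductSpace

variable {E : Type*} [MeasurableSpace E] {N : ℕ}

/-- The σ-algebra generated by the `i`-th coordinate. -/
def coordSigma (i : Fin N) : MeasurableSpace (Fin N → E) :=
  MeasurableSpace.comap (fun ω => ω i) inferInstance

lemma coordSigma_le (i : Fin N) :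
    (coordSigma i : MeasurableSpace (Fin N → E)) ≤ MeasurableSpace.pi :=
  measurable_iff_comap_le.1 (measurable_pi_apply i)

lemma pi_eq_iSup_coordSigma :
    (MeasurableSpace.pi : MeasurableSpace (Fin N → E)) = ⨆ i, coordSigma i := rfl

lemma glauberSigma_eq (j : Fin N) :
    (glauberSigma j : MeasurableSpace (Fin N → E))
      = ⨆ i ∈ ({j}ᶜ : Set (Fin N)), coordSigma i := by
  have h0 : (inferInstance : MeasurableSpace ({i : Fin N // i ≠ j} → E))
      = ⨆ k : {i : Fin N // i ≠ j}, MeasurableSpace.comap (fun ω => ω k) inferInstance := rfl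
  rw [glauberSigma, h0, MeasurableSpace.comap_iSup]
  simp_rw [MeasurableSpace.comap_comp, Function.comp_def]
  rw [iSup_subtype]
  simp only [Set.mem_compl_iff, Set.mem_singleton_iff]
  rfl

variable (ν : Measure E) [IsProbabilityMeasure ν]

lemma measure_pi_eval_preimage (i : Fin N) {A : Set E} (hA : MeasurableSet A) :
    (Measure.pi fun _ : Fin N => ν) ((fun ω => ω i) ⁻¹' A) = ν A := by
  have : (fun ω : Fin N → E => ω i) ⁻¹' A
      = Set.pi Set.univ (Function.update (fun _ => Set.univ) i A) := by
    rw [Set.eval_preimage]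
  rw [this, Measure.pi_pi]
  rw [Finset.prod_eq_single i]
  · simp
  · intro b _ hb; simp [Function.update_apply, hb]
  · simp

lemma iIndep_coordSigma :
    iIndep (coordSigma : Fin N → MeasurableSpace (Fin N → E))
      (Measure.pi fun _ : Fin N => ν) := by
  rw [iIndep_iff]
  intro S f hf
  have hch : ∀ i, i ∈ S → ∃ A, MeasurableSet A ∧ (fun ω : Fin N → E => ω i) ⁻¹' A = f i := by
    intro i hi
    exact MeasurableSpace.measurableSet_comap.mp (hf i hi)
  choose! A hAm hAe using hch
  classical
  have hB : ⋂ i ∈ S, f i = Set.pi Set.univ (fun k => if k ∈ S then A k else Set.univ) := by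
    ext x
    simp only [Set.mem_iInter, Set.mem_univ_pi]
    constructor
    · intro hx k
      by_cases hk : k ∈ S
      · simp only [hk, if_true]
        have := hx k hk
        rw [← hAe k hk] at this; exact this
      · simp [hk]
    · intro hx i hi
      have := hx i
      simp only [hi, if_true] at this
      rw [← hAe i hi]; exact this
  rw [hB, Measure.pi_pi]
  have : ∀ k : Fin N, ν (if k ∈ S then A k else Set.univ)
      = if k ∈ S then ν (A k) else 1 := by
    intro k; by_cases hk : k ∈ S <;> simp [hk]
  rw [Finset.prod_congr rfl fun k _ => this k, Finset.prod_ite_mem, Finset.univ_inter]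
  refine Finset.prod_congr rfl fun i hi => ?_
  rw [← hAe i hi, measure_pi_eval_preimage ν i (hAm i hi)]

lemma indep_glauberSigma (j : Fin N) :
    Indep (glauberSigma j) (coordSigma j : MeasurableSpace (Fin N → E))
      (Measure.pi fun _ : Fin N => ν) := by
  have h := ProbabilityTheory.indep_biSup_compl (fun i => coordSigma_le i)
    (iIndep_coordSigma ν) ({j}ᶜ : Set (Fin N))
  rw [compl_compl] at h
  have h2 : (⨆ n ∈ ({j} : Set (Fin N)), coordSigma n : MeasurableSpace (Fin N → E))
      = coordSigma j := by
    simp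
  rw [h2] at h
  rwa [glauberSigma_eq]

end ProductSpace

/-- Efron–Stein inequality via Glauber calculus:
`Var[X] ≤ ∑ⱼ E[|Dⱼ X|²]` for `X ∈ L²` of `N` i.i.d. variables. -/
theorem efron_stein_glauber
    {E : Type*} [MeasurableSpace E] (ν : Measure E) [IsProbabilityMeasure ν] (N : ℕ)
    (X : (Fin N → E) → ℝ) (hX : MemLp X 2 (Measure.pi fun _ : Fin N => ν)) :
    ProbabilityTheory.variance X (Measure.pi fun _ : Fin N => ν) ≤
      ∑ j : Fin N, ∫ ω, |glauberD ν j X ω| ^ 2 ∂(Measure.pi fun _ : Fin N => ν) := by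
  classical
  set μ : Measure (Fin N → E) := Measure.pi fun _ : Fin N => ν with hμdef
  have hXi : Integrable X μ := hX.integrable one_le_two
  -- the filtration of coordinates `< k`
  let F : ℕ → MeasurableSpace (Fin N → E) :=
    fun k => ⨆ i : Fin N, ⨆ _ : (i : ℕ) < k, coordSigma i
  have hFle : ∀ k, F k ≤ MeasurableSpace.pi := fun k => iSup₂_le fun i _ => coordSigma_le i
  have hGle : ∀ j : Fin N,
      (glauberSigma j : MeasurableSpace (Fin N → E)) ≤ MeasurableSpace.pi := by
    intro j; rw [glauberSigma_eq]
    exact iSup₂_le fun i _ => coordSigma_le i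
  have hFmono : ∀ k, F k ≤ F (k + 1) :=
    fun k => iSup₂_le fun i h => le_iSup₂ (f := fun (i : Fin N) (_ : (i : ℕ) < k + 1) => coordSigma i) i (Nat.lt_succ_of_lt h)
  have hF0 : F 0 = ⊥ :=
    le_antisymm (iSup₂_le fun i h => absurd h (Nat.not_lt_zero _)) bot_le
  have hFN : F N = MeasurableSpace.pi := by
    refine le_antisymm (hFle N) ?_
    rw [pi_eq_iSup_coordSigma]
    exact iSup_le fun i => le_iSup₂ (f := fun (i : Fin N) (_ : (i : ℕ) < N) => coordSigma i) i i.isLt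
  have hFsucc : ∀ k (hk : k < N), F (k + 1) = F k ⊔ coordSigma ⟨k, hk⟩ := by
    intro k hk
    refine le_antisymm (iSup₂_le fun i h => ?_)
      (sup_le (hFmono k) (le_iSup₂ (f := fun (i : Fin N) (_ : (i : ℕ) < k + 1) => coordSigma i) (⟨k, hk⟩ : Fin N) (Nat.lt_succ_self k)))
    rcases Nat.lt_succ_iff_lt_or_eq.mp h with h' | h'
    · exact le_trans (le_iSup₂ (f := fun (i : Fin N) (_ : (i : ℕ) < k) => coordSigma i) i h') le_sup_left
    · have hi : i = ⟨k, hk⟩ := Fin.ext h'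
      rw [hi]; exact le_sup_right
  have hFG : ∀ k (hk : k < N), F k ≤ glauberSigma ⟨k, hk⟩ := by
    intro k hk; rw [glauberSigma_eq]
    refine iSup₂_le fun i h => le_iSup₂ (f := fun (i : Fin N) (_ : i ∈ ({(⟨k, hk⟩ : Fin N)}ᶜ : Set (Fin N))) => coordSigma i) i ?_
    simp only [Set.mem_compl_iff, Set.mem_singleton_iff]
    intro hij
    rw [hij] at h
    exact absurd h (lt_irrefl _)
  -- the martingale
  set M : ℕ → (Fin N → E) → ℝ := fun k => μ[X|F k] with hMdef
  have hM2 : ∀ k, MemLp (M k) 2 μ := fun k => memL2_condexp (hFle k) hX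
  have hD2 : ∀ j : Fin N, MemLp (glauberD ν j X) 2 μ := by
    intro j
    have : glauberD ν j X = X - μ[X|glauberSigma j] := rfl
    rw [this]
    exact hX.sub (memL2_condexp (hGle j) hX)
  -- increment identification
  have step1 : ∀ k (hk : k < N),
      μ[glauberD ν ⟨k, hk⟩ X|F (k + 1)] =ᵐ[μ] fun x => M (k + 1) x - M k x := by
    intro k hk
    have h1 : μ[glauberD ν ⟨k, hk⟩ X|F (k + 1)]
        =ᵐ[μ] μ[X|F (k + 1)] - μ[μ[X|glauberSigma ⟨k, hk⟩]|F (k + 1)] := by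
      have hdef : glauberD ν (⟨k, hk⟩ : Fin N) X = X - μ[X|glauberSigma ⟨k, hk⟩] := rfl
      rw [hdef]
      exact condExp_sub hXi integrable_condExp _
    have h2 : μ[μ[X|glauberSigma ⟨k, hk⟩]|F (k + 1)]
        =ᵐ[μ] μ[μ[X|glauberSigma ⟨k, hk⟩]|F k] := by
      rw [hFsucc k hk]
      exact condexp_sup_of_indep (hGle _) (hFle k) (coordSigma_le _) (hFG k hk)
        (indep_glauberSigma ν _) stronglyMeasurable_condExp integrable_condExp
    have h3 : μ[μ[X|glauberSigma ⟨k, hk⟩]|F k] =ᵐ[μ] μ[X|F k] :=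
      condExp_condExp_of_le (hFG k hk) (hGle _)
    filter_upwards [h1, h2, h3] with x e1 e2 e3
    simp only [Pi.sub_apply] at e1
    rw [e1, e2, e3]
  -- one-step energy decomposition
  have key : ∀ k (hk : k < N),
      ∫ x, ((X - M k) x) ^ 2 ∂μ
        = ∫ x, ((μ[glauberD ν ⟨k, hk⟩ X|F (k + 1)]) x) ^ 2 ∂μ
          + ∫ x, ((X - M (k + 1)) x) ^ 2 ∂μ := by
    intro k hk
    have hg2 : MemLp (X - M k) 2 μ := hX.sub (hM2 k)
    have hcond : μ[X - M k|F (k + 1)] =ᵐ[μ] fun x => M (k + 1) x - M k x := by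
      refine (condExp_sub hXi integrable_condExp _).trans ?_
      have hMk : μ[M k|F (k + 1)] = M k :=
        condExp_of_stronglyMeasurable (hFle (k + 1))
          (stronglyMeasurable_condExp.mono (hFmono k)) integrable_condExp
      rw [hMk]
      exact Filter.EventuallyEq.rfl
    have energy := energy_condexp (hFle (k + 1)) hg2
    rw [energy]
    congr 1
    · refine integral_congr_ae ?_
      filter_upwards [hcond, step1 k hk] with x e1 e2
      rw [e1, e2]
    · refine integral_congr_ae ?_
      filter_upwards [hcond] with x e1
      simp only [Pi.sub_apply] at e1 ⊢
      rw [e1]; ring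
  -- telescoping
  set B : ℕ → ℝ := fun j =>
    if h : j < N then ∫ x, ((μ[glauberD ν ⟨j, h⟩ X|F (j + 1)]) x) ^ 2 ∂μ else 0 with hBdef
  have tel : ∀ k, k ≤ N →
      ∫ x, ((X - M 0) x) ^ 2 ∂μ
        = ∫ x, ((X - M k) x) ^ 2 ∂μ + ∑ j ∈ Finset.range k, B j := by
    intro k
    induction k with
    | zero => intro _; simp
    | succ k ih =>
      intro hk1
      have hk : k < N := Nat.lt_of_succ_le hk1
      have e := key k hk
      have e0 := ih (le_of_lt hk)
      rw [Finset.sum_range_succ]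
      have hBk : B k = ∫ x, ((μ[glauberD ν ⟨k, hk⟩ X|F (k + 1)]) x) ^ 2 ∂μ := by
        rw [hBdef]; simp only [hk, dif_pos]
      rw [e0, e, hBk]; ring
  -- identify the ends
  have hM0 : M 0 = fun _ => ∫ x, X x ∂μ := by
    show μ[X|F 0] = _
    rw [hF0, condExp_bot]
  have hVar : ProbabilityTheory.variance X μ = ∫ x, ((X - M 0) x) ^ 2 ∂μ := by
    rw [variance_eq_integral hX.1.aemeasurable, hM0]
    rfl
  have hXN : μ[X|F N] =ᵐ[μ] X := by
    refine condExp_of_aestronglyMeasurable' (hFle N) ?_ hXi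
    rw [hFN]
    exact ⟨hX.1.mk X, hX.1.stronglyMeasurable_mk, hX.1.ae_eq_mk⟩
  have hMNzero : ∫ x, ((X - M N) x) ^ 2 ∂μ = 0 := by
    have : (fun x => ((X - M N) x) ^ 2) =ᵐ[μ] fun _ => (0 : ℝ) := by
      filter_upwards [hXN] with x e
      simp only [Pi.sub_apply]
      rw [show M N x = X x from e]
      ring
    rw [integral_congr_ae this, integral_zero]
  -- final sum manipulation
  set G : ℕ → ℝ := fun j =>
    if h : j < N then ∫ x, |glauberD ν ⟨j, h⟩ X x| ^ 2 ∂μ else 0 with hGdef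
  have hsum : ∑ j : Fin N, ∫ ω, |glauberD ν j X ω| ^ 2 ∂μ = ∑ j ∈ Finset.range N, G j := by
    rw [← Fin.sum_univ_eq_sum_range]
    refine Finset.sum_congr rfl fun j _ => ?_
    rw [hGdef]
    simp only [j.isLt, dif_pos]
  have hterm : ∀ j ∈ Finset.range N, B j ≤ G j := by
    intro j hj
    have h : j < N := Finset.mem_range.mp hj
    rw [hBdef, hGdef]
    simp only [h, dif_pos]
    have h1 : ∫ x, ((μ[glauberD ν ⟨j, h⟩ X|F (j + 1)]) x) ^ 2 ∂μ
        ≤ ∫ x, (glauberD ν ⟨j, h⟩ X x) ^ 2 ∂μ :=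
      integral_sq_condexp_le (hFle (j + 1)) (hD2 _)
    have h2 : ∫ x, (glauberD ν ⟨j, h⟩ X x) ^ 2 ∂μ
        = ∫ x, |glauberD ν ⟨j, h⟩ X x| ^ 2 ∂μ := by
      refine integral_congr_ae (Filter.Eventually.of_forall fun x => ?_)
      simp [sq_abs]
    rw [← h2]
    exact h1
  calc ProbabilityTheory.variance X μ = ∫ x, ((X - M 0) x) ^ 2 ∂μ := hVar
    _ = ∫ x, ((X - M N) x) ^ 2 ∂μ + ∑ j ∈ Finset.range N, B j := tel N le_rfl
    _ = ∑ j ∈ Finset.range N, B j := by rw [hMNzero, zero_add]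
    _ ≤ ∑ j ∈ Finset.range N, G j := Finset.sum_le_sum hterm
    _ = ∑ j : Fin N, ∫ ω, |glauberD ν j X ω| ^ 2 ∂μ := hsum.symm
end

section
/- Let X be a bounded random variable measurable with respect to i.i.d. variables Z₁,...,Z_N, with E[X] = 0, and suppose the Glauber derivatives satisfy |D_j X| ≤ L/2 almost surely for all j, for some constant L > 0. Then for all λ > 0, E[e^{λX}] ≤ exp( (N/2) λ L (e^{λL} - 1) ). -/
open MeasureTheory

section aux
variable {E : Type*} [MeasurableSpace E] (ν : Measure E) [IsProbabilityMeasure ν]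

lemma integrable_of_bdd {α : Type*} [MeasurableSpace α] {ρ : Measure α} [IsFiniteMeasure ρ]
    {f : α → ℝ} (hf : AEStronglyMeasurable f ρ) {C : ℝ} (h : ∀ᵐ x ∂ρ, |f x| ≤ C) :
    Integrable f ρ :=
  ⟨hf, HasFiniteIntegral.of_bounded (h.mono fun x hx => by simpa using hx)⟩

lemma update_measurePreserving {N : ℕ} (j : Fin N) :
    MeasurePreserving (fun p : (Fin N → E) × E => Function.update p.1 j p.2)
      ((Measure.pi fun _ : Fin N => ν).prod ν) (Measure.pi fun _ : Fin N => ν) := by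
  refine ⟨measurable_update', ?_⟩
  refine (Measure.pi_eq fun s hs => ?_).symm
  rw [Measure.map_apply measurable_update' (MeasurableSet.univ_pi hs)]
  have hpre : (fun p : (Fin N → E) × E => Function.update p.1 j p.2) ⁻¹'
      (Set.pi Set.univ s) = (Set.pi {j}ᶜ s) ×ˢ (s j) := by
    ext ⟨ω, z⟩
    simp only [Set.mem_preimage, Set.mem_pi, Set.mem_univ, forall_true_left, Set.mem_prod,
      Set.mem_compl_iff, Set.mem_singleton_iff]
    constructor
    · intro h
      refine ⟨fun i hi => ?_, by simpa using h j⟩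
      have := h i
      rwa [Function.update_of_ne hi] at this
    · rintro ⟨h1, h2⟩ i
      by_cases hi : i = j
      · subst hi; simpa
      · rw [Function.update_of_ne hi]; exact h1 i hi
  rw [hpre, Measure.prod_prod]
  have : Set.pi ({j}ᶜ) s = Set.pi Set.univ (fun i => if i = j then Set.univ else s i) := by
    ext ω
    simp only [Set.mem_pi, Set.mem_univ, forall_true_left, Set.mem_compl_iff,
      Set.mem_singleton_iff]
    constructor
    · intro h i
      by_cases hi : i = j
      · simp [hi]
      · simpa [hi] using h i hi
    · intro h i hi
      have := h i
      rwa [if_neg hi] at this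
  rw [this, Measure.pi_pi]
  calc (∏ i, ν (if i = j then Set.univ else s i)) * ν (s j)
      = (∏ i, ν (if i = j then Set.univ else s i)) * ∏ i, (if i = j then ν (s j) else 1) := by
        simp [Finset.prod_ite_eq']
    _ = ∏ i, ν (s i) := by
        rw [← Finset.prod_mul_distrib]
        refine Finset.prod_congr rfl fun i _ => ?_
        by_cases hi : i = j
        · subst hi; simp
        · simp [hi]

lemma cons_measurable {N : ℕ} :
    Measurable (fun p : (Fin N → E) × E => (Fin.cons p.2 p.1 : Fin (N+1) → E)) := by
  refine measurable_pi_lambda _ fun i => ?_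
  refine Fin.cases ?_ (fun k => ?_) i
  · simpa using measurable_snd
  · simp only [Fin.cons_succ]; exact (measurable_pi_apply k).comp measurable_fst

lemma cons_measurePreserving {N : ℕ} :
    MeasurePreserving (fun p : (Fin N → E) × E => (Fin.cons p.2 p.1 : Fin (N+1) → E))
      ((Measure.pi fun _ : Fin N => ν).prod ν) (Measure.pi fun _ : Fin (N+1) => ν) := by
  refine ⟨cons_measurable (E := E), ?_⟩
  refine (Measure.pi_eq fun s hs => ?_).symm
  rw [Measure.map_apply (cons_measurable (E := E)) (MeasurableSet.univ_pi hs)]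
  have hpre : (fun p : (Fin N → E) × E => (Fin.cons p.2 p.1 : Fin (N+1) → E)) ⁻¹' (Set.pi Set.univ s)
      = (Set.pi Set.univ fun i => s i.succ) ×ˢ (s 0) := by
    ext ⟨ω, z⟩
    simp only [Set.mem_preimage, Set.mem_pi, Set.mem_univ, forall_true_left, Set.mem_prod]
    rw [Fin.forall_fin_succ]
    simp [and_comm]
  rw [hpre, Measure.prod_prod, Measure.pi_pi, Fin.prod_univ_succ, mul_comm]

end aux

section aux2
variable {E : Type*} [MeasurableSpace E] (ν : Measure E) [IsProbabilityMeasure ν]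

lemma exp_integral_le {α : Type*} [MeasurableSpace α] {ρ : Measure α} [IsProbabilityMeasure ρ]
    {f : α → ℝ} (hint : Integrable f ρ) (hmean : ∫ x, f x ∂ρ = 0) {a : ℝ} (ha : 0 < a)
    (hb : ∀ᵐ x ∂ρ, |f x| ≤ a) :
    ∫ x, Real.exp (f x) ∂ρ ≤ Real.exp (a ^ 2 / 2) := by
  set c1 : ℝ := Real.exp (-a) / (2 * a) with hc1
  set c2 : ℝ := Real.exp a / (2 * a) with hc2
  have hexp_int : Integrable (fun x => Real.exp (f x)) ρ := by
    refine integrable_of_bdd (Real.continuous_exp.comp_aestronglyMeasurable hint.1) (C := Real.exp a) ?_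
    filter_upwards [hb] with x hx
    rw [abs_of_pos (Real.exp_pos _)]
    exact Real.exp_le_exp.2 (le_of_abs_le hx)
  have key : ∀ᵐ x ∂ρ, Real.exp (f x) ≤ c1 * (a - f x) + c2 * (a + f x) := by
    filter_upwards [hb] with x hx
    have h1 : -a ≤ f x := neg_le_of_abs_le hx
    have h2 : f x ≤ a := le_of_abs_le hx
    have hcvx := convexOn_exp.2 (Set.mem_univ (-a)) (Set.mem_univ a)
      (show (0:ℝ) ≤ (a - f x)/(2*a) from div_nonneg (by linarith) (by linarith))
      (show (0:ℝ) ≤ (a + f x)/(2*a) from div_nonneg (by linarith) (by linarith))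
      (show (a - f x)/(2*a) + (a + f x)/(2*a) = 1 by field_simp; ring)
    have harg : ((a - f x)/(2*a)) • (-a) + ((a + f x)/(2*a)) • a = f x := by
      simp only [smul_eq_mul]; field_simp; ring
    rw [harg] at hcvx
    simp only [smul_eq_mul] at hcvx
    calc Real.exp (f x) ≤ (a - f x)/(2*a) * Real.exp (-a) + (a + f x)/(2*a) * Real.exp a := hcvx
      _ = c1 * (a - f x) + c2 * (a + f x) := by rw [hc1, hc2]; ring
  have hrhs_int : Integrable (fun x => c1 * (a - f x) + c2 * (a + f x)) ρ := by
    refine Integrable.add ?_ ?_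
    · exact ((integrable_const a).sub hint).const_mul _
    · exact ((integrable_const a).add hint).const_mul _
  calc ∫ x, Real.exp (f x) ∂ρ ≤ ∫ x, (c1 * (a - f x) + c2 * (a + f x)) ∂ρ :=
        integral_mono_ae hexp_int hrhs_int key
    _ = (c1 + c2) * a + (c2 - c1) * 0 := by
        have heq : (fun x => c1 * (a - f x) + c2 * (a + f x))
            = fun x => (c1 + c2) * a + (c2 - c1) * f x := by funext x; ring
        rw [heq, integral_add (integrable_const _) (hint.const_mul _), integral_const,
          integral_const_mul, hmean]
        simp
    _ = Real.cosh a := by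
        rw [Real.cosh_eq, hc1, hc2]
        rw [mul_zero, add_zero]
        field_simp
        ring
    _ ≤ Real.exp (a ^ 2 / 2) := Real.cosh_le_exp_half_sq a

lemma integrable_cons {N : ℕ} {f : (Fin (N+1) → E) → ℝ} (hf : Measurable f) {C : ℝ}
    (hC : ∀ ω, |f ω| ≤ C) :
    Integrable (fun p : (Fin N → E) × E => f (Fin.cons p.2 p.1))
      ((Measure.pi fun _ : Fin N => ν).prod ν) :=
  integrable_of_bdd ((hf.comp (cons_measurable (E := E))).aestronglyMeasurable)
    (ae_of_all _ fun p => hC _)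

lemma integral_cons {N : ℕ} {f : (Fin (N+1) → E) → ℝ} (hf : Measurable f) {C : ℝ}
    (hC : ∀ ω, |f ω| ≤ C) :
    ∫ ω, f ω ∂(Measure.pi fun _ : Fin (N+1) => ν)
      = ∫ ω, ∫ z, f (Fin.cons z ω) ∂ν ∂(Measure.pi fun _ : Fin N => ν) := by
  rw [← (cons_measurePreserving ν).map_eq,
    integral_map (cons_measurable (E := E)).aemeasurable
      (by rw [(cons_measurePreserving ν).map_eq]; exact hf.aestronglyMeasurable)]
  exact integral_prod _ (integrable_cons ν hf hC)

end aux2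

section aux3
variable {E : Type*} [MeasurableSpace E] (ν : Measure E) [IsProbabilityMeasure ν]

lemma measurable_cons_fixed {N : ℕ} (ω : Fin N → E) :
    Measurable fun z : E => (Fin.cons z ω : Fin (N+1) → E) :=
  (cons_measurable (E := E)).comp (measurable_const.prodMk measurable_id)

lemma explicit_bound : ∀ {N : ℕ} (X : (Fin N → E) → ℝ), Measurable X →
    ∀ C : ℝ, (∀ ω, |X ω| ≤ C) →
    (∫ ω, X ω ∂(Measure.pi fun _ : Fin N => ν)) = 0 →
    ∀ a : ℝ, 0 < a →
    (∀ j : Fin N, ∀ᵐ ω ∂(Measure.pi fun _ : Fin N => ν),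
      |X ω - ∫ z, X (Function.update ω j z) ∂ν| ≤ a) →
    ∫ ω, Real.exp (X ω) ∂(Measure.pi fun _ : Fin N => ν) ≤ Real.exp (N * (a ^ 2 / 2)) := by
  intro N
  induction N with
  | zero =>
    intro X hX C hC hmean a ha hD
    have hkey : X default = 0 := by
      have hXc : X = fun _ => X default := funext fun ω => congrArg X (Subsingleton.elim _ _)
      rw [hXc, integral_const] at hmean
      simpa using hmean
    have hXeq : X = fun _ => (0 : ℝ) := funext fun ω => by
      rw [Subsingleton.elim ω default, hkey]
    rw [hXeq]
    simp
  | succ N ih =>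
    intro X hX C hC hmean a ha hD
    set μN := (Measure.pi fun _ : Fin N => ν) with hμN
    set Y : (Fin N → E) → ℝ := fun ω => ∫ z, X (Fin.cons z ω) ∂ν with hY
    have hconsp : Measurable (fun p : (Fin N → E) × E => X (Fin.cons p.2 p.1)) :=
      hX.comp (cons_measurable (E := E))
    have hYmeas : Measurable Y := hconsp.stronglyMeasurable.integral_prod_right'.measurable
    have hYbdd : ∀ ω, |Y ω| ≤ C := by
      intro ω
      have := norm_integral_le_of_norm_le_const (μ := ν)
        (f := fun z => X (Fin.cons z ω)) (C := C) (ae_of_all _ fun z => by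
          simpa [Real.norm_eq_abs] using hC (Fin.cons z ω))
      simpa [Real.norm_eq_abs] using this
    have hYmean : ∫ ω, Y ω ∂μN = 0 := (integral_cons ν hX hC).symm.trans hmean
    have htrans : ∀ {P : (Fin (N+1) → E) → Prop},
        (∀ᵐ ω ∂(Measure.pi fun _ : Fin (N+1) => ν), P ω) →
        ∀ᵐ p ∂(μN.prod ν), P (Fin.cons p.2 p.1) := fun h =>
      (cons_measurePreserving ν).quasiMeasurePreserving.ae h
    -- Glauber condition for Y
    have hDY : ∀ j : Fin N, ∀ᵐ ω ∂μN, |Y ω - ∫ z', Y (Function.update ω j z') ∂ν| ≤ a := by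
      intro j
      have h1 := htrans (hD j.succ)
      have h2 : ∀ᵐ p ∂(μN.prod ν),
          |X (Fin.cons p.2 p.1) - ∫ z', X (Fin.cons p.2 (Function.update p.1 j z')) ∂ν| ≤ a := by
        filter_upwards [h1] with p hp
        simpa only [← Fin.cons_update] using hp
      have h3 := Measure.ae_ae_of_ae_prod h2
      filter_upwards [h3] with ω hω
      have hswap : ∫ z', Y (Function.update ω j z') ∂ν
          = ∫ z, ∫ z', X (Fin.cons z (Function.update ω j z')) ∂ν ∂ν := by
        refine integral_integral_swap ?_
        refine integrable_of_bdd ?_ (C := C) (ae_of_all _ fun q => hC _)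
        exact (hX.comp ((cons_measurable (E := E)).comp
          (((measurable_update ω).comp measurable_fst).prodMk measurable_snd))).aestronglyMeasurable
      have hint1 : Integrable (fun z => X (Fin.cons z ω)) ν :=
        integrable_of_bdd (hX.comp (measurable_cons_fixed ω)).aestronglyMeasurable
          (ae_of_all _ fun z => hC _)
      have hmeas2 : Measurable (fun z => ∫ z', X (Fin.cons z (Function.update ω j z')) ∂ν) := by
        have : Measurable (fun q : E × E => X (Fin.cons q.1 (Function.update ω j q.2))) :=
          hX.comp ((cons_measurable (E := E)).comp
            (((measurable_update ω).comp measurable_snd).prodMk measurable_fst))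
        exact this.stronglyMeasurable.integral_prod_right'.measurable
      have hint2 : Integrable (fun z => ∫ z', X (Fin.cons z (Function.update ω j z')) ∂ν) ν := by
        refine integrable_of_bdd hmeas2.aestronglyMeasurable (C := C) (ae_of_all _ fun z => ?_)
        have := norm_integral_le_of_norm_le_const (μ := ν)
          (f := fun z' => X (Fin.cons z (Function.update ω j z'))) (C := C)
          (ae_of_all _ fun z' => by simpa [Real.norm_eq_abs] using hC _)
        simpa [Real.norm_eq_abs] using this
      have hdiff : Y ω - ∫ z', Y (Function.update ω j z') ∂ν
          = ∫ z, (X (Fin.cons z ω) - ∫ z', X (Fin.cons z (Function.update ω j z')) ∂ν) ∂ν := by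
        rw [hswap, ← integral_sub hint1 hint2]
      rw [hdiff]
      have := norm_integral_le_of_norm_le_const (μ := ν)
        (f := fun z => X (Fin.cons z ω) - ∫ z', X (Fin.cons z (Function.update ω j z')) ∂ν)
        (C := a) (hω.mono fun z hz => by simpa [Real.norm_eq_abs] using hz)
      simpa [Real.norm_eq_abs] using this
    -- Hoeffding step at coordinate zero
    have h0 : ∀ᵐ ω ∂μN, ∀ᵐ z ∂ν, |X (Fin.cons z ω) - Y ω| ≤ a := by
      have h1 := htrans (hD 0)
      have h2 : ∀ᵐ p ∂(μN.prod ν), |X (Fin.cons p.2 p.1) - Y p.1| ≤ a := by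
        filter_upwards [h1] with p hp
        simpa only [Fin.update_cons_zero] using hp
      exact Measure.ae_ae_of_ae_prod h2
    have key : ∀ᵐ ω ∂μN, ∫ z, Real.exp (X (Fin.cons z ω)) ∂ν
        ≤ Real.exp (a ^ 2 / 2) * Real.exp (Y ω) := by
      filter_upwards [h0] with ω hω
      have hint1 : Integrable (fun z => X (Fin.cons z ω)) ν :=
        integrable_of_bdd (hX.comp (measurable_cons_fixed ω)).aestronglyMeasurable
          (ae_of_all _ fun z => hC _)
      have hintf : Integrable (fun z => X (Fin.cons z ω) - Y ω) ν := hint1.sub (integrable_const _)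
      have hmeanf : ∫ z, (X (Fin.cons z ω) - Y ω) ∂ν = 0 := by
        rw [integral_sub hint1 (integrable_const _), integral_const]
        simp [hY]
      have happ := exp_integral_le hintf hmeanf ha hω
      have hrw : (fun z => Real.exp (X (Fin.cons z ω)))
          = fun z => Real.exp (X (Fin.cons z ω) - Y ω) * Real.exp (Y ω) := by
        funext z
        rw [← Real.exp_add]
        ring_nf
      rw [hrw, integral_mul_const]
      exact mul_le_mul_of_nonneg_right happ (Real.exp_pos _).le
    -- assemble
    have hexpX : Measurable (fun ω => Real.exp (X ω)) := Real.measurable_exp.comp hX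
    have hexpXb : ∀ ω, |Real.exp (X ω)| ≤ Real.exp C := fun ω => by
      rw [abs_of_pos (Real.exp_pos _)]
      exact Real.exp_le_exp.2 (le_of_abs_le (hC ω))
    have hint_inner : Integrable (fun ω => ∫ z, Real.exp (X (Fin.cons z ω)) ∂ν) μN := by
      have hm : Measurable (fun ω => ∫ z, Real.exp (X (Fin.cons z ω)) ∂ν) :=
        (hexpX.comp (cons_measurable (E := E))).stronglyMeasurable.integral_prod_right'.measurable
      refine integrable_of_bdd hm.aestronglyMeasurable (C := Real.exp C) (ae_of_all _ fun ω => ?_)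
      have := norm_integral_le_of_norm_le_const (μ := ν)
        (f := fun z => Real.exp (X (Fin.cons z ω))) (C := Real.exp C)
        (ae_of_all _ fun z => by simpa [Real.norm_eq_abs] using hexpXb _)
      simpa [Real.norm_eq_abs] using this
    have hint_rhs : Integrable (fun ω => Real.exp (a ^ 2 / 2) * Real.exp (Y ω)) μN := by
      refine Integrable.const_mul ?_ _
      refine integrable_of_bdd (Real.measurable_exp.comp hYmeas).aestronglyMeasurable
        (C := Real.exp C) (ae_of_all _ fun ω => ?_)
      rw [abs_of_pos (Real.exp_pos _)]
      exact Real.exp_le_exp.2 (le_of_abs_le (hYbdd ω))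
    calc ∫ ω, Real.exp (X ω) ∂(Measure.pi fun _ : Fin (N+1) => ν)
        = ∫ ω, ∫ z, Real.exp (X (Fin.cons z ω)) ∂ν ∂μN := integral_cons ν hexpX hexpXb
      _ ≤ ∫ ω, Real.exp (a ^ 2 / 2) * Real.exp (Y ω) ∂μN :=
          integral_mono_ae hint_inner hint_rhs key
      _ = Real.exp (a ^ 2 / 2) * ∫ ω, Real.exp (Y ω) ∂μN := integral_const_mul _ _
      _ ≤ Real.exp (a ^ 2 / 2) * Real.exp (N * (a ^ 2 / 2)) :=
          mul_le_mul_of_nonneg_left (ih Y hYmeas C hYbdd hYmean a ha hDY) (Real.exp_pos _).le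
      _ = Real.exp ((N + 1 : ℕ) * (a ^ 2 / 2)) := by
          rw [← Real.exp_add]
          push_cast
          ring_nf

end aux3

section aux4
variable {E : Type*} [MeasurableSpace E] (ν : Measure E) [IsProbabilityMeasure ν]

lemma integral_update {N : ℕ} (j : Fin N) {f : (Fin N → E) → ℝ} (hf : Measurable f) {C : ℝ}
    (hC : ∀ ω, |f ω| ≤ C) :
    ∫ ω, f ω ∂(Measure.pi fun _ : Fin N => ν)
      = ∫ ω, ∫ z, f (Function.update ω j z) ∂ν ∂(Measure.pi fun _ : Fin N => ν) := by
  have h1 : ∫ ω, f ω ∂(Measure.pi fun _ : Fin N => ν)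
      = ∫ p, f (Function.update p.1 j p.2) ∂((Measure.pi fun _ : Fin N => ν).prod ν) := by
    conv_lhs => rw [← (update_measurePreserving ν j).map_eq]
    refine integral_map (f := f) (φ := fun p : (Fin N → E) × E => Function.update p.1 j p.2)
      measurable_update'.aemeasurable ?_
    rw [(update_measurePreserving ν j).map_eq]
    exact hf.aestronglyMeasurable
  rw [h1]
  exact integral_prod _ (integrable_of_bdd
    ((hf.comp measurable_update').aestronglyMeasurable) (ae_of_all _ fun p => hC _))

lemma condexp_glauber {N : ℕ} (j : Fin N) (X : (Fin N → E) → ℝ) (hX : Measurable X) {C : ℝ}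
    (hC : ∀ ω, |X ω| ≤ C) :
    (Measure.pi fun _ : Fin N => ν)[X|glauberSigma j]
      =ᵐ[Measure.pi fun _ : Fin N => ν] fun ω => ∫ z, X (Function.update ω j z) ∂ν := by
  set μ := (Measure.pi fun _ : Fin N => ν) with hμ
  set proj : (Fin N → E) → ({i : Fin N // i ≠ j} → E) :=
    fun ω => fun i : {i : Fin N // i ≠ j} => ω i.1 with hproj_def
  have hproj : Measurable proj := measurable_pi_lambda _ fun i => measurable_pi_apply i.1
  have hm : glauberSigma (E := E) j ≤ MeasurableSpace.pi := hproj.comap_le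
  set g : (Fin N → E) → ℝ := fun ω => ∫ z, X (Function.update ω j z) ∂ν with hg_def
  have hXint : Integrable X μ := integrable_of_bdd hX.aestronglyMeasurable (ae_of_all _ hC)
  have hgmeas : Measurable g :=
    (hX.comp measurable_update').stronglyMeasurable.integral_prod_right'.measurable
  have hgbdd : ∀ ω, |g ω| ≤ C := by
    intro ω
    have := norm_integral_le_of_norm_le_const (μ := ν)
      (f := fun z => X (Function.update ω j z)) (C := C)
      (ae_of_all _ fun z => by simpa [Real.norm_eq_abs] using hC _)
    simpa [Real.norm_eq_abs] using this
  have hgint : Integrable g μ := integrable_of_bdd hgmeas.aestronglyMeasurable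
    (ae_of_all _ hgbdd)
  -- the embedding reconstructing ω from (proj ω, z)
  set emb : ({i : Fin N // i ≠ j} → E) × E → (Fin N → E) :=
    fun p i => if h : i = j then p.2 else p.1 ⟨i, h⟩ with hemb_def
  have hemb : Measurable emb := by
    refine measurable_pi_lambda _ fun i => ?_
    by_cases hi : i = j
    · simp only [hemb_def, dif_pos hi]; exact measurable_snd
    · simp only [hemb_def, dif_neg hi]; exact (measurable_pi_apply _).comp measurable_fst
  have hembkey : ∀ (ω : Fin N → E) (z : E), emb (proj ω, z) = Function.update ω j z := by
    intro ω z
    funext i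
    by_cases hi : i = j
    · subst hi; simp [hemb_def]
    · simp [hemb_def, dif_neg hi, Function.update_of_ne hi, hproj_def]
  refine (ae_eq_condExp_of_forall_setIntegral_eq hm hXint
    (fun s _ _ => hgint.integrableOn) ?_ ?_).symm
  · -- set integrals agree
    intro s hs _
    obtain ⟨t, ht, rfl⟩ := MeasurableSpace.measurableSet_comap.1 hs
    have hsm : MeasurableSet (proj ⁻¹' t) := hproj ht
    have hinv : ∀ (ω : Fin N → E) (z : E),
        Function.update ω j z ∈ proj ⁻¹' t ↔ ω ∈ proj ⁻¹' t := by
      intro ω z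
      have : proj (Function.update ω j z) = proj ω := by
        funext i
        exact Function.update_of_ne i.2 _ _
      simp [Set.mem_preimage, this]
    have hIbdd : ∀ ω, |Set.indicator (proj ⁻¹' t) X ω| ≤ C := by
      intro ω
      by_cases hω : ω ∈ proj ⁻¹' t
      · rw [Set.indicator_of_mem hω]; exact hC ω
      · rw [Set.indicator_of_notMem hω, abs_zero]
        exact (abs_nonneg (X ω)).trans (hC ω)
    have h2 : ∀ ω, ∫ z, Set.indicator (proj ⁻¹' t) X (Function.update ω j z) ∂ν
        = Set.indicator (proj ⁻¹' t) g ω := by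
      intro ω
      by_cases hω : ω ∈ proj ⁻¹' t
      · rw [Set.indicator_of_mem hω]
        refine integral_congr_ae (ae_of_all _ fun z => ?_)
        show (proj ⁻¹' t).indicator X (Function.update ω j z) = X (Function.update ω j z)
        rw [Set.indicator_of_mem ((hinv ω z).2 hω)]
      · rw [Set.indicator_of_notMem hω]
        have : ∀ z, Set.indicator (proj ⁻¹' t) X (Function.update ω j z) = 0 := fun z =>
          Set.indicator_of_notMem (fun h => hω ((hinv ω z).1 h)) X
        simp only [this, integral_zero]
    rw [← integral_indicator hsm, ← integral_indicator hsm,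
      integral_update ν j (hX.indicator hsm) hIbdd]
    simp_rw [h2]
    rfl
  · -- measurability wrt glauberSigma
    have hH : Measurable fun y : {i : Fin N // i ≠ j} → E => ∫ z, X (emb (y, z)) ∂ν :=
      (hX.comp hemb).stronglyMeasurable.integral_prod_right'.measurable
    have hgm : Measurable[glauberSigma (E := E) j] g := by
      have : g = (fun y => ∫ z, X (emb (y, z)) ∂ν) ∘ proj := by
        funext ω
        simp only [hg_def, Function.comp_apply]
        refine integral_congr_ae (ae_of_all _ fun z => ?_)
        show X (Function.update ω j z) = X (emb (proj ω, z))
        rw [hembkey ω z]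
      rw [this]
      exact hH.comp (comap_measurable proj)
    exact hgm.stronglyMeasurable.aestronglyMeasurable

end aux4

/-- Exponential moment bound: if `X` is bounded and centered with Glauber derivatives
bounded by `L/2`, then `E[e^{λX}] ≤ exp((N/2) λ L (e^{λL} - 1))` for all `λ > 0`. -/
theorem glauber_exponential_moment_bound
    {E : Type*} [MeasurableSpace E] (ν : Measure E) [IsProbabilityMeasure ν] (N : ℕ)
    (X : (Fin N → E) → ℝ) (hmeas : Measurable X) (C : ℝ) (hbdd : ∀ ω, |X ω| ≤ C)
    (hmean : ∫ ω, X ω ∂(Measure.pi fun _ : Fin N => ν) = 0)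
    (L : ℝ) (hL : 0 < L)
    (hD : ∀ j : Fin N,
      ∀ᵐ ω ∂(Measure.pi fun _ : Fin N => ν), |glauberD ν j X ω| ≤ L / 2) :
    ∀ l : ℝ, 0 < l →
      ∫ ω, Real.exp (l * X ω) ∂(Measure.pi fun _ : Fin N => ν) ≤
        Real.exp ((N : ℝ) / 2 * (l * L) * (Real.exp (l * L) - 1)) := by
  intro l hl
  have hD' : ∀ j : Fin N, ∀ᵐ ω ∂(Measure.pi fun _ : Fin N => ν),
      |X ω - ∫ z, X (Function.update ω j z) ∂ν| ≤ L / 2 := by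
    intro j
    filter_upwards [hD j, condexp_glauber ν j X hmeas hbdd] with ω h1 h2
    simp only [glauberD] at h1
    rw [← h2]
    exact h1
  have hbound := explicit_bound ν (fun ω => l * X ω) (hmeas.const_mul l) (l * C)
    (fun ω => by
      rw [abs_mul, abs_of_pos hl]
      exact mul_le_mul_of_nonneg_left (hbdd ω) hl.le)
    (by rw [integral_const_mul, hmean, mul_zero])
    (l * L / 2) (by positivity)
    (fun j => by
      filter_upwards [hD' j] with ω hω
      rw [integral_const_mul, ← mul_sub, abs_mul, abs_of_pos hl]
      calc l * |X ω - ∫ z, X (Function.update ω j z) ∂ν| ≤ l * (L / 2) :=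
            mul_le_mul_of_nonneg_left hω hl.le
        _ = l * L / 2 := by ring)
  refine hbound.trans (Real.exp_le_exp.2 ?_)
  have ht := Real.add_one_le_exp (l * L)
  have htpos : 0 < l * L := mul_pos hl hL
  have hNpos : (0:ℝ) ≤ (N : ℝ) := Nat.cast_nonneg N
  have base : (l * L / 2) ^ 2 / 2 ≤ 1 / 2 * (l * L) * (Real.exp (l * L) - 1) := by
    nlinarith
  calc (N : ℝ) * ((l * L / 2) ^ 2 / 2)
      ≤ (N : ℝ) * (1 / 2 * (l * L) * (Real.exp (l * L) - 1)) :=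
        mul_le_mul_of_nonneg_left base hNpos
    _ = (N : ℝ) / 2 * (l * L) * (Real.exp (l * L) - 1) := by ring
end

section
/- Under the hypotheses of the previous exponential moment bound (E[X]=0, |D_j X| ≤ L/2 a.s. for all j ≤ N), the concentration estimate P[X > r] ≤ exp( -(r/(4L)) log(1 + r/(NL)) ) holds for all r > 0, and moreover the right-hand side is at most exp(-r²/(8NL²)) whenever r ≤ NL. -/
open MeasureTheory

namespace GlauberAux

variable {E : Type*} [MeasurableSpace E]

def merge {N : ℕ} (k : ℕ) (p : (Fin N → E) × (Fin N → E)) : Fin N → E :=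
  fun i => if (i : ℕ) < k then p.1 i else p.2 i

lemma measurable_merge {N : ℕ} (k : ℕ) : Measurable (merge (E := E) (N := N) k) := by
  apply measurable_pi_lambda
  intro i
  by_cases h : (i : ℕ) < k
  · simpa [merge, h, Function.comp_def] using (measurable_pi_apply i).comp measurable_fst
  · simpa [merge, h, Function.comp_def] using (measurable_pi_apply i).comp measurable_snd

variable (ν : Measure E) [IsProbabilityMeasure ν]

lemma mp_merge {N : ℕ} (k : ℕ) :
    MeasurePreserving (merge (E := E) (N := N) k)
      ((Measure.pi fun _ : Fin N => ν).prod (Measure.pi fun _ : Fin N => ν))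
      (Measure.pi fun _ : Fin N => ν) := by
  refine ⟨measurable_merge k, ?_⟩
  refine (Measure.pi_eq fun s hs => ?_).symm
  rw [Measure.map_apply (measurable_merge k) (MeasurableSet.univ_pi hs)]
  have hpre : merge (E := E) (N := N) k ⁻¹' Set.pi Set.univ s =
      (Set.pi Set.univ fun i : Fin N => if (i : ℕ) < k then s i else Set.univ) ×ˢ
        (Set.pi Set.univ fun i : Fin N => if (i : ℕ) < k then Set.univ else s i) := by
    ext ⟨ω, τ⟩
    simp only [Set.mem_preimage, Set.mem_pi, Set.mem_univ, forall_true_left, Set.mem_prod,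
      merge]
    constructor
    · intro h
      constructor <;> intro i <;> by_cases hik : (i : ℕ) < k <;> simp [hik] <;>
        simpa [hik] using h i
    · rintro ⟨h1, h2⟩ i
      by_cases hik : (i : ℕ) < k
      · simpa [hik] using h1 i
      · simpa [hik] using h2 i
  rw [hpre, Measure.prod_prod, Measure.pi_pi, Measure.pi_pi, ← Finset.prod_mul_distrib]
  refine Finset.prod_congr rfl fun i _ => ?_
  by_cases hik : (i : ℕ) < k <;> simp [hik]


lemma mp_update {N : ℕ} (j : Fin N) :
    MeasurePreserving (fun p : (Fin N → E) × E => Function.update p.1 j p.2)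
      ((Measure.pi fun _ : Fin N => ν).prod ν) (Measure.pi fun _ : Fin N => ν) := by
  refine ⟨measurable_update', ?_⟩
  refine (Measure.pi_eq fun s hs => ?_).symm
  rw [Measure.map_apply measurable_update' (MeasurableSet.univ_pi hs)]
  have hpre : (fun p : (Fin N → E) × E => Function.update p.1 j p.2) ⁻¹' Set.pi Set.univ s =
      (Set.pi Set.univ fun i : Fin N => if i = j then Set.univ else s i) ×ˢ s j := by
    ext ⟨ω, z⟩
    simp only [Set.mem_preimage, Set.mem_pi, Set.mem_univ, forall_true_left, Set.mem_prod,
      Function.update_apply]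
    constructor
    · intro h
      refine ⟨fun i => ?_, by simpa using h j⟩
      by_cases hij : i = j
      · simp [hij]
      · simpa [hij] using h i
    · rintro ⟨h1, h2⟩ i
      by_cases hij : i = j
      · simpa [hij] using h2
      · simpa [hij] using h1 i
  rw [hpre, Measure.prod_prod, Measure.pi_pi]
  have h1 : (∏ i : Fin N, ν (if i = j then Set.univ else s i)) = ∏ i ∈ Finset.univ.erase j, ν (s i) := by
    rw [← Finset.mul_prod_erase Finset.univ (fun i => ν (if i = j then Set.univ else s i))
      (Finset.mem_univ j)]
    have hj : ν (if j = j then Set.univ else s j) = 1 := by simp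
    rw [hj, one_mul]
    exact Finset.prod_congr rfl fun i hi => by rw [if_neg (Finset.ne_of_mem_erase hi)]
  rw [h1, ← Finset.mul_prod_erase Finset.univ _ (Finset.mem_univ j), mul_comm]


-- generic helpers
lemma integrable_of_bdd {α : Type*} [MeasurableSpace α] {μ : Measure α} [IsFiniteMeasure μ]
    {f : α → ℝ} {c : ℝ} (hf : AEStronglyMeasurable f μ) (h : ∀ x, |f x| ≤ c) :
    Integrable f μ :=
  ⟨hf, HasFiniteIntegral.of_bounded (C := c) (ae_of_all _ fun x => by
    simpa [Real.norm_eq_abs] using h x)⟩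

lemma abs_integral_le {α : Type*} [MeasurableSpace α] (μ : Measure α) [IsProbabilityMeasure μ]
    {f : α → ℝ} {c : ℝ} (h : ∀ᵐ x ∂μ, |f x| ≤ c) : |∫ x, f x ∂μ| ≤ c := by
  have := norm_integral_le_of_norm_le_const (μ := μ) (f := f) (C := c)
    (by filter_upwards [h] with x hx using by simpa [Real.norm_eq_abs] using hx)
  simpa [Real.norm_eq_abs] using this

variable {N : ℕ} (X : (Fin N → E) → ℝ)

noncomputable def gj (j : Fin N) : (Fin N → E) → ℝ :=
  fun ω => ∫ z, X (Function.update ω j z) ∂ν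

noncomputable def Gk (k : ℕ) : (Fin N → E) → ℝ :=
  fun ω => ∫ τ, X (merge k (ω, τ)) ∂(Measure.pi fun _ : Fin N => ν)

variable {X}

lemma measurable_gj (hmeas : Measurable X) (j : Fin N) : Measurable (gj ν X j) :=
  ((hmeas.comp measurable_update').stronglyMeasurable.integral_prod_right').measurable

lemma measurable_Gk (hmeas : Measurable X) (k : ℕ) : Measurable (Gk ν X k) :=
  ((hmeas.comp (measurable_merge k)).stronglyMeasurable.integral_prod_right').measurable

lemma abs_gj_le {C : ℝ} (hbdd : ∀ ω, |X ω| ≤ C) (j : Fin N) (ω : Fin N → E) :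
    |gj ν X j ω| ≤ C :=
  abs_integral_le ν (ae_of_all _ fun z => hbdd _)

lemma abs_Gk_le {C : ℝ} (hbdd : ∀ ω, |X ω| ≤ C) (k : ℕ) (ω : Fin N → E) :
    |Gk ν X k ω| ≤ C :=
  abs_integral_le _ (ae_of_all _ fun τ => hbdd _)

lemma gj_update (j : Fin N) (ω : Fin N → E) (z : E) :
    gj ν X j (Function.update ω j z) = gj ν X j ω := by
  simp only [gj, Function.update_idem]

lemma update_mem_glauber_iff {j : Fin N} {t : Set ({i : Fin N // i ≠ j} → E)}
    (ω : Fin N → E) (z : E) :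
    Function.update ω j z ∈ (fun ω => fun i : {i : Fin N // i ≠ j} => ω i.1) ⁻¹' t ↔
      ω ∈ (fun ω => fun i : {i : Fin N // i ≠ j} => ω i.1) ⁻¹' t := by
  have : (fun i : {i : Fin N // i ≠ j} => Function.update ω j z i.1) =
      (fun i : {i : Fin N // i ≠ j} => ω i.1) := by
    funext i
    exact Function.update_of_ne i.2 _ _
  simp [Set.mem_preimage, this]

lemma integral_update_eq {N : ℕ} (j : Fin N) (f : (Fin N → E) → ℝ)
    (hf : AEStronglyMeasurable f (Measure.pi fun _ : Fin N => ν)) :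
    ∫ ω, f ω ∂(Measure.pi fun _ : Fin N => ν) =
      ∫ q, f (Function.update q.1 j q.2) ∂((Measure.pi fun _ : Fin N => ν).prod ν) := by
  conv_lhs => rw [← (mp_update ν j).map_eq]
  exact integral_map (mp_update ν j).measurable.aemeasurable
    (by rw [(mp_update ν j).map_eq]; exact hf)

lemma integral_merge_eq {N : ℕ} (k : ℕ) (f : (Fin N → E) → ℝ)
    (hf : AEStronglyMeasurable f (Measure.pi fun _ : Fin N => ν)) :
    ∫ ω, f ω ∂(Measure.pi fun _ : Fin N => ν) =
      ∫ q, f (merge k q)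
        ∂((Measure.pi fun _ : Fin N => ν).prod (Measure.pi fun _ : Fin N => ν)) := by
  conv_lhs => rw [← (mp_merge ν k).map_eq]
  exact integral_map (mp_merge ν k).measurable.aemeasurable
    (by rw [(mp_merge ν k).map_eq]; exact hf)

/-- The conditional expectation given all coordinates except `j` is the integral over the
`j`-th coordinate. -/
lemma condexp_glauber (hmeas : Measurable X) {C : ℝ} (hbdd : ∀ ω, |X ω| ≤ C) (j : Fin N) :
    (Measure.pi fun _ : Fin N => ν)[X|glauberSigma j]
      =ᵐ[Measure.pi fun _ : Fin N => ν] gj ν X j := by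
  set μ : Measure (Fin N → E) := Measure.pi fun _ : Fin N => ν with hμ
  have hproj : Measurable fun ω : Fin N → E => fun i : {i : Fin N // i ≠ j} => ω i.1 :=
    measurable_pi_lambda _ fun i => measurable_pi_apply i.1
  have hm : glauberSigma (E := E) j ≤ (inferInstance : MeasurableSpace (Fin N → E)) :=
    measurable_iff_comap_le.mp hproj
  have hXint : Integrable X μ := integrable_of_bdd hmeas.aestronglyMeasurable hbdd
  have hgmeas : Measurable (gj ν X j) := measurable_gj ν hmeas j
  have habsC : ∀ ω, |X ω| ≤ |C| := fun ω => (hbdd ω).trans (le_abs_self C)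
  have hgint : Integrable (gj ν X j) μ :=
    integrable_of_bdd hgmeas.aestronglyMeasurable (abs_gj_le ν hbdd j)
  have hgm : AEStronglyMeasurable[glauberSigma j] (gj ν X j) μ := by
    have hfun : Measurable fun η : {i : Fin N // i ≠ j} → E =>
        ∫ z, X (fun i => if hi : i = j then z else η ⟨i, hi⟩) ∂ν := by
      have hj : Measurable fun p : ({i : Fin N // i ≠ j} → E) × E =>
          X (fun i => if hi : i = j then p.2 else p.1 ⟨i, hi⟩) := by
        refine hmeas.comp (measurable_pi_lambda _ fun i => ?_)
        by_cases hi : i = j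
        · simpa [hi] using measurable_snd
        · simpa [hi, Function.comp_def] using
            (measurable_pi_apply (⟨i, hi⟩ : {i : Fin N // i ≠ j})).comp measurable_fst
      exact hj.stronglyMeasurable.integral_prod_right'.measurable
    have hcomp : gj ν X j = (fun η : {i : Fin N // i ≠ j} → E =>
        ∫ z, X (fun i => if hi : i = j then z else η ⟨i, hi⟩) ∂ν) ∘
        (fun ω => fun i : {i : Fin N // i ≠ j} => ω i.1) := by
      funext ω
      simp only [Function.comp_apply, gj]
      refine integral_congr_ae (ae_of_all _ fun z => ?_)
      show X (Function.update ω j z) = X fun i => if hi : i = j then z else ω i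
      congr 1
      funext i
      by_cases hi : i = j <;> simp [hi, Function.update_apply]
    have hmg : Measurable[glauberSigma j] (gj ν X j) := by
      rw [hcomp]
      exact hfun.comp (comap_measurable _)
    exact (hmg.stronglyMeasurable).aestronglyMeasurable
  refine (ae_eq_condExp_of_forall_setIntegral_eq hm hXint
    (fun s _ _ => hgint.integrableOn) (fun s hs _ => ?_) hgm).symm
  obtain ⟨t, ht, rfl⟩ := hs
  set p : (Fin N → E) → ({i : Fin N // i ≠ j} → E) := (fun ω => fun i => ω i.1) with hp
  have hsmeas : MeasurableSet (p ⁻¹' t) := hproj ht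
  have key : ∀ f : (Fin N → E) → ℝ, Measurable f → (∀ ω, |f ω| ≤ |C|) →
      ∫ ω in p ⁻¹' t, f ω ∂μ =
        ∫ ω, ∫ z, Set.indicator (p ⁻¹' t) f (Function.update ω j z) ∂ν ∂μ := by
    intro f hf hfb
    have hindb : ∀ ω, |Set.indicator (p ⁻¹' t) f ω| ≤ |C| := by
      intro ω
      by_cases hω : ω ∈ p ⁻¹' t <;> simp [Set.indicator_apply, hω, hfb ω, abs_nonneg]
    have hind : Integrable (Set.indicator (p ⁻¹' t) f) μ :=
      integrable_of_bdd ((hf.indicator hsmeas).aestronglyMeasurable) hindb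
    rw [← integral_indicator hsmeas]
    calc ∫ ω, Set.indicator (p ⁻¹' t) f ω ∂μ
        = ∫ q, Set.indicator (p ⁻¹' t) f (Function.update q.1 j q.2) ∂(μ.prod ν) :=
          integral_update_eq ν j _ hind.aestronglyMeasurable
      _ = ∫ ω, ∫ z, Set.indicator (p ⁻¹' t) f (Function.update ω j z) ∂ν ∂μ := by
          refine integral_prod _ ?_
          exact integrable_of_bdd
            (((hf.indicator hsmeas).comp measurable_update').aestronglyMeasurable)
            (fun q => hindb _)
  have h1 : ∫ ω in p ⁻¹' t, X ω ∂μ = ∫ ω, Set.indicator (p ⁻¹' t) (gj ν X j) ω ∂μ := by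
    rw [key X hmeas habsC]
    refine integral_congr_ae (ae_of_all _ fun ω => ?_)
    by_cases hω : ω ∈ p ⁻¹' t
    · have hz : ∀ z, Function.update ω j z ∈ p ⁻¹' t := fun z =>
        (update_mem_glauber_iff ω z).2 hω
      rw [Set.indicator_of_mem hω]
      refine integral_congr_ae (ae_of_all _ fun z => ?_)
      show Set.indicator (p ⁻¹' t) X (Function.update ω j z) = X (Function.update ω j z)
      rw [Set.indicator_of_mem (hz z)]
    · have hz : ∀ z, Function.update ω j z ∉ p ⁻¹' t := fun z hc =>
        hω ((update_mem_glauber_iff ω z).1 hc)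
      rw [Set.indicator_of_notMem hω]
      have : ∀ z, Set.indicator (p ⁻¹' t) X (Function.update ω j z) = 0 := fun z =>
        Set.indicator_of_notMem (hz z) X
      simp only [this]
      simp
  have h2 : ∫ ω in p ⁻¹' t, gj ν X j ω ∂μ
      = ∫ ω, Set.indicator (p ⁻¹' t) (gj ν X j) ω ∂μ := by
    rw [integral_indicator hsmeas]
  rw [h1, h2]

section GkLemmas

variable {C : ℝ} (hmeas : Measurable X) (hbdd : ∀ ω, |X ω| ≤ |C|)

lemma Gk_N (ω : Fin N → E) : Gk ν X N ω = X ω := by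
  have : ∀ τ, X (merge N (ω, τ)) = X ω := by
    intro τ
    congr 1
    funext i
    simp [merge, i.isLt]
  simp only [Gk, this, integral_const, measure_univ, ENNReal.toReal_one, probReal_univ, one_smul]

lemma Gk_zero (ω : Fin N → E) : Gk ν X 0 ω = ∫ τ, X τ ∂(Measure.pi fun _ : Fin N => ν) := by
  have h : ∀ τ : Fin N → E, merge (N := N) 0 (ω, τ) = τ := fun τ => funext fun i => by
    simp [merge]
  show (∫ τ, X (merge 0 (ω, τ)) ∂(Measure.pi fun _ : Fin N => ν)) = _
  simp only [h]

lemma merge_update_right (j : Fin N) (ω τ : Fin N → E) (z : E) :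
    merge (j : ℕ) (ω, Function.update τ j z) =
      Function.update (merge ((j : ℕ) + 1) (ω, τ)) j z := by
  funext i
  simp only [merge, Function.update_apply]
  by_cases hij : i = j
  · subst hij; simp
  · have hne : (i : ℕ) ≠ (j : ℕ) := fun h => hij (Fin.val_injective h)
    by_cases hik : (i : ℕ) < (j : ℕ)
    · have h3 : (i : ℕ) < (j : ℕ) + 1 := by omega
      simp [hik, hij, h3]
    · have h2 : ¬ ((i : ℕ) < (j : ℕ) + 1) := by omega
      simp [hik, hij, h2]

lemma merge_update_left (j : Fin N) (ω τ : Fin N → E) (z : E) :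
    merge ((j : ℕ) + 1) (Function.update ω j z, τ) =
      Function.update (merge ((j : ℕ) + 1) (ω, τ)) j z := by
  funext i
  simp only [merge, Function.update_apply]
  by_cases hij : i = j
  · subst hij; simp
  · by_cases hik : (i : ℕ) < (j : ℕ) + 1
    · simp [hik, hij]
    · simp [hik, hij]

lemma merge_update_left_lower (j : Fin N) (ω τ : Fin N → E) (z : E) :
    merge (j : ℕ) (Function.update ω j z, τ) = merge (j : ℕ) (ω, τ) := by
  funext i
  simp only [merge, Function.update_apply]
  by_cases hik : (i : ℕ) < (j : ℕ)
  · have hij : ¬ (i = j) := fun h => by simp [h] at hik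
    simp [hik, hij]
  · simp [hik]

include hmeas hbdd

lemma Gk_eq_integral_gj (j : Fin N) (ω : Fin N → E) :
    Gk ν X j ω = ∫ τ, gj ν X j (merge ((j : ℕ) + 1) (ω, τ))
      ∂(Measure.pi fun _ : Fin N => ν) := by
  have hmm : Measurable fun τ : Fin N → E => X (merge (j : ℕ) (ω, τ)) :=
    hmeas.comp ((measurable_merge _).comp (measurable_const.prodMk measurable_id))
  calc Gk ν X j ω = ∫ τ, X (merge (j : ℕ) (ω, τ)) ∂(Measure.pi fun _ : Fin N => ν) := rfl
    _ = ∫ q, X (merge (j : ℕ) (ω, Function.update q.1 j q.2))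
          ∂((Measure.pi fun _ : Fin N => ν).prod ν) :=
        integral_update_eq ν j _ hmm.aestronglyMeasurable
    _ = ∫ q : (Fin N → E) × E, X (Function.update (merge ((j : ℕ) + 1) (ω, q.1)) j q.2)
          ∂((Measure.pi fun _ : Fin N => ν).prod ν) := by
        refine integral_congr_ae (ae_of_all _ fun q => ?_)
        show X (merge (j : ℕ) (ω, Function.update q.1 j q.2)) =
          X (Function.update (merge ((j : ℕ) + 1) (ω, q.1)) j q.2)
        rw [merge_update_right]
    _ = ∫ τ, ∫ z, X (Function.update (merge ((j : ℕ) + 1) (ω, τ)) j z) ∂ν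
          ∂(Measure.pi fun _ : Fin N => ν) := by
        refine integral_prod _ ?_
        refine integrable_of_bdd ?_ (fun q => hbdd _)
        exact (hmeas.comp (measurable_update'.comp
          (((measurable_merge _).comp
            (measurable_const.prodMk measurable_fst)).prodMk measurable_snd))).aestronglyMeasurable
    _ = _ := rfl

lemma Gk_succ_update (j : Fin N) (ω : Fin N → E) (z : E) :
    Gk ν X ((j : ℕ) + 1) (Function.update ω j z) =
      ∫ τ, X (Function.update (merge ((j : ℕ) + 1) (ω, τ)) j z)
        ∂(Measure.pi fun _ : Fin N => ν) := by
  refine integral_congr_ae (ae_of_all _ fun τ => ?_)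
  show X (merge ((j : ℕ) + 1) (Function.update ω j z, τ)) = _
  rw [merge_update_left]

lemma Gk_update_lower (j : Fin N) (ω : Fin N → E) (z : E) :
    Gk ν X (j : ℕ) (Function.update ω j z) = Gk ν X (j : ℕ) ω := by
  refine integral_congr_ae (ae_of_all _ fun τ => ?_)
  show X (merge (j : ℕ) (Function.update ω j z, τ)) = X (merge (j : ℕ) (ω, τ))
  rw [merge_update_left_lower]

lemma integral_z_Gk_succ (j : Fin N) (ω : Fin N → E) :
    ∫ z, Gk ν X ((j : ℕ) + 1) (Function.update ω j z) ∂ν = Gk ν X (j : ℕ) ω := by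
  have h1 : ∫ z, Gk ν X ((j : ℕ) + 1) (Function.update ω j z) ∂ν =
      ∫ z, ∫ τ, X (Function.update (merge ((j : ℕ) + 1) (ω, τ)) j z)
        ∂(Measure.pi fun _ : Fin N => ν) ∂ν := by
    refine integral_congr_ae (ae_of_all _ fun z => ?_)
    exact Gk_succ_update ν hmeas hbdd j ω z
  rw [h1]
  rw [integral_integral_swap]
  · rw [Gk_eq_integral_gj ν hmeas hbdd j ω]
    rfl
  · refine integrable_of_bdd ?_ (fun q => hbdd _)
    exact (hmeas.comp (measurable_update'.comp
      ((((measurable_merge _).comp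
        (measurable_const.prodMk measurable_snd))).prodMk measurable_fst))).aestronglyMeasurable

end GkLemmas


lemma exp_le_quad {u : ℝ} (hu : |u| ≤ 1) : Real.exp u ≤ 1 + u + 3 / 4 * u ^ 2 := by
  have h := Real.exp_bound hu (n := 2) (by norm_num)
  have h2 := (abs_sub_le_iff.1 h).1
  have hs : ∑ m ∈ Finset.range 2, u ^ m / (Nat.factorial m) = 1 + u := by
    simp [Finset.sum_range_succ]
  rw [hs] at h2
  have habs : |u| ^ 2 = u ^ 2 := sq_abs u
  norm_num at h2
  nlinarith [sq_abs u]

section Main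

variable {C L : ℝ} (hmeas : Measurable X) (hbdd : ∀ ω, |X ω| ≤ |C|)

include hmeas hbdd

lemma abs_Gk_succ_sub (j : Fin N) (hL : 0 < L)
    (hDc : ∀ᵐ ω ∂(Measure.pi fun _ : Fin N => ν), |X ω - gj ν X j ω| ≤ L / 2) :
    ∀ᵐ ω ∂(Measure.pi fun _ : Fin N => ν),
      |Gk ν X ((j : ℕ) + 1) ω - Gk ν X (j : ℕ) ω| ≤ L / 2 := by
  have hgmeas := measurable_gj ν hmeas j
  have hBmeas : MeasurableSet {ω : Fin N → E | ¬ |X ω - gj ν X j ω| ≤ L / 2} :=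
    (measurableSet_le ((hmeas.sub hgmeas).abs) measurable_const).compl
  have hprod : ∀ᵐ q ∂((Measure.pi fun _ : Fin N => ν).prod (Measure.pi fun _ : Fin N => ν)),
      |X (merge ((j : ℕ) + 1) q) - gj ν X j (merge ((j : ℕ) + 1) q)| ≤ L / 2 := by
    rw [ae_iff] at hDc ⊢
    have hpre := (mp_merge ν ((j : ℕ) + 1)).measure_preimage
      (s := {ω : Fin N → E | ¬ |X ω - gj ν X j ω| ≤ L / 2}) hBmeas.nullMeasurableSet
    calc ((Measure.pi fun _ : Fin N => ν).prod (Measure.pi fun _ : Fin N => ν))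
          {q | ¬ |X (merge ((j : ℕ) + 1) q) - gj ν X j (merge ((j : ℕ) + 1) q)| ≤ L / 2}
        = ((Measure.pi fun _ : Fin N => ν).prod (Measure.pi fun _ : Fin N => ν))
            (merge ((j : ℕ) + 1) ⁻¹' {ω | ¬ |X ω - gj ν X j ω| ≤ L / 2}) := rfl
      _ = 0 := hpre.trans hDc
  filter_upwards [Measure.ae_ae_of_ae_prod hprod] with ω hω
  have hint1 : Integrable (fun τ => X (merge ((j : ℕ) + 1) (ω, τ)))
      (Measure.pi fun _ : Fin N => ν) := by
    refine integrable_of_bdd ?_ (fun τ => hbdd _)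
    exact (hmeas.comp ((measurable_merge _).comp
      (measurable_const.prodMk measurable_id))).aestronglyMeasurable
  have hint2 : Integrable (fun τ => gj ν X j (merge ((j : ℕ) + 1) (ω, τ)))
      (Measure.pi fun _ : Fin N => ν) := by
    refine integrable_of_bdd ?_ (fun τ => abs_gj_le ν (fun ω' => hbdd ω') j _)
    exact (hgmeas.comp ((measurable_merge _).comp
      (measurable_const.prodMk measurable_id))).aestronglyMeasurable
  have h1 : Gk ν X ((j : ℕ) + 1) ω - Gk ν X (j : ℕ) ω =
      ∫ τ, (X (merge ((j : ℕ) + 1) (ω, τ)) - gj ν X j (merge ((j : ℕ) + 1) (ω, τ)))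
        ∂(Measure.pi fun _ : Fin N => ν) := by
    rw [integral_sub hint1 hint2, Gk_eq_integral_gj ν hmeas hbdd j ω]
    rfl
  rw [h1]
  exact abs_integral_le _ hω


lemma step_exp (j : Fin N) {l : ℝ} (hl : 0 ≤ l) (hlL : l * L ≤ 2) (hL : 0 < L)
    (hdiff : ∀ᵐ ω ∂(Measure.pi fun _ : Fin N => ν),
      |Gk ν X ((j : ℕ) + 1) ω - Gk ν X (j : ℕ) ω| ≤ L / 2) :
    ∫ ω, Real.exp (l * Gk ν X ((j : ℕ) + 1) ω) ∂(Measure.pi fun _ : Fin N => ν) ≤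
      (1 + 3 / 16 * l ^ 2 * L ^ 2) *
        ∫ ω, Real.exp (l * Gk ν X (j : ℕ) ω) ∂(Measure.pi fun _ : Fin N => ν) := by
  have hGmeas : ∀ k : ℕ, Measurable (Gk ν X k) := measurable_Gk ν hmeas
  have hGbdd : ∀ (k : ℕ) ω, |Gk ν X k ω| ≤ |C| := fun k => abs_Gk_le ν hbdd k
  have hexp_bdd : ∀ (k : ℕ) ω, |Real.exp (l * Gk ν X k ω)| ≤ Real.exp (l * |C|) := by
    intro k ω
    rw [abs_of_pos (Real.exp_pos _)]
    apply Real.exp_le_exp.2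
    calc l * Gk ν X k ω ≤ l * |Gk ν X k ω| := by
          apply mul_le_mul_of_nonneg_left (le_abs_self _) hl
      _ ≤ l * |C| := mul_le_mul_of_nonneg_left (hGbdd k ω) hl
  have hexp_meas : ∀ k : ℕ, Measurable fun ω => Real.exp (l * Gk ν X k ω) := fun k =>
    (Real.measurable_exp).comp ((measurable_const.mul (hGmeas k)))
  -- pull hdiff back through update
  have hBmeas : MeasurableSet
      {ω : Fin N → E | ¬ |Gk ν X ((j : ℕ) + 1) ω - Gk ν X (j : ℕ) ω| ≤ L / 2} :=
    (measurableSet_le (((hGmeas _).sub (hGmeas _)).abs) measurable_const).compl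
  have hprod : ∀ᵐ q ∂((Measure.pi fun _ : Fin N => ν).prod ν),
      |Gk ν X ((j : ℕ) + 1) (Function.update q.1 j q.2) -
        Gk ν X (j : ℕ) (Function.update q.1 j q.2)| ≤ L / 2 := by
    rw [ae_iff] at hdiff ⊢
    have hpre := (mp_update ν j).measure_preimage
      (s := {ω : Fin N → E | ¬ |Gk ν X ((j : ℕ) + 1) ω - Gk ν X (j : ℕ) ω| ≤ L / 2})
      hBmeas.nullMeasurableSet
    exact hpre.trans hdiff
  have hprod2 : ∀ᵐ q ∂((Measure.pi fun _ : Fin N => ν).prod ν),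
      |Gk ν X ((j : ℕ) + 1) (Function.update q.1 j q.2) - Gk ν X (j : ℕ) q.1| ≤ L / 2 := by
    filter_upwards [hprod] with q hq
    rwa [Gk_update_lower ν hmeas hbdd j q.1 q.2] at hq
  have hae := Measure.ae_ae_of_ae_prod hprod2
  -- inner bound for good ω
  have hinner : ∀ᵐ ω ∂(Measure.pi fun _ : Fin N => ν),
      ∫ z, Real.exp (l * Gk ν X ((j : ℕ) + 1) (Function.update ω j z)) ∂ν ≤
        (1 + 3 / 16 * l ^ 2 * L ^ 2) * Real.exp (l * Gk ν X (j : ℕ) ω) := by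
    filter_upwards [hae] with ω hω
    set d : E → ℝ := fun z => Gk ν X ((j : ℕ) + 1) (Function.update ω j z) -
      Gk ν X (j : ℕ) ω with hd
    have hdmeas : Measurable d :=
      ((hGmeas _).comp (measurable_update ω)).sub measurable_const
    have hdbdd : ∀ z, |d z| ≤ |C| + |C| := fun z =>
      (abs_sub _ _).trans (add_le_add (hGbdd _ _) (hGbdd _ _))
    have hdint : Integrable d ν := integrable_of_bdd hdmeas.aestronglyMeasurable hdbdd
    have hdsqint : Integrable (fun z => d z ^ 2) ν := by
      refine integrable_of_bdd ((hdmeas.pow_const 2).aestronglyMeasurable) (c := (|C| + |C|) ^ 2)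
        fun z => ?_
      rw [abs_pow]
      exact pow_le_pow_left₀ (abs_nonneg _) (hdbdd z) 2
    have hAint : Integrable (fun z => Gk ν X ((j : ℕ) + 1) (Function.update ω j z)) ν :=
      integrable_of_bdd (((hGmeas _).comp (measurable_update ω)).aestronglyMeasurable)
        fun z => hGbdd _ _
    have hdmean : ∫ z, d z ∂ν = 0 := by
      have hsub : ∫ z, d z ∂ν =
          (∫ z, Gk ν X ((j : ℕ) + 1) (Function.update ω j z) ∂ν) -
            ∫ _z, Gk ν X (j : ℕ) ω ∂ν := integral_sub hAint (integrable_const _)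
      rw [hsub, integral_z_Gk_succ ν hmeas hbdd j ω, integral_const]
      simp
    have hexpd_int : Integrable (fun z => Real.exp (l * d z)) ν := by
      refine integrable_of_bdd ((Real.measurable_exp.comp
        (measurable_const.mul hdmeas)).aestronglyMeasurable)
        (c := Real.exp (l * (|C| + |C|))) fun z => ?_
      rw [abs_of_pos (Real.exp_pos _)]
      exact Real.exp_le_exp.2 ((mul_le_mul_of_nonneg_left (le_abs_self _) hl).trans
        (mul_le_mul_of_nonneg_left (hdbdd z) hl))
    have key : ∫ z, Real.exp (l * d z) ∂ν ≤ 1 + 3 / 16 * l ^ 2 * L ^ 2 := by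
      have i1 : Integrable (fun z => 1 + l * d z) ν :=
        (integrable_const 1).add (hdint.const_mul l)
      have i2 : Integrable (fun z => 3 / 4 * (l * d z) ^ 2) ν := by
        have := (hdsqint.const_mul (3 / 4 * l ^ 2)).congr
          (ae_of_all _ (fun z => show 3 / 4 * l ^ 2 * d z ^ 2 = 3 / 4 * (l * d z) ^ 2 by ring))
        exact this
      have hmono : ∫ z, Real.exp (l * d z) ∂ν ≤
          ∫ z, (1 + l * d z + 3 / 4 * (l * d z) ^ 2) ∂ν := by
        refine integral_mono_ae hexpd_int (i1.add i2) ?_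
        filter_upwards [hω] with z hz
        refine exp_le_quad ?_
        rw [abs_mul, abs_of_nonneg hl]
        calc l * |d z| ≤ l * (L / 2) := mul_le_mul_of_nonneg_left hz hl
          _ ≤ 1 := by nlinarith
      have hcalc : ∫ z, (1 + l * d z + 3 / 4 * (l * d z) ^ 2) ∂ν =
          1 + 3 / 4 * l ^ 2 * ∫ z, d z ^ 2 ∂ν := by
        have e1 : ∫ z, (1 + l * d z + 3 / 4 * (l * d z) ^ 2) ∂ν =
            (∫ z, (1 + l * d z) ∂ν) + ∫ z, 3 / 4 * (l * d z) ^ 2 ∂ν := integral_add i1 i2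
        have e2 : ∫ z, (1 + l * d z) ∂ν = (∫ _z, (1 : ℝ) ∂ν) + ∫ z, l * d z ∂ν :=
          integral_add (integrable_const 1) (hdint.const_mul l)
        have e3 : ∫ z, l * d z ∂ν = l * ∫ z, d z ∂ν := integral_const_mul l d
        have e4 : ∫ z, 3 / 4 * (l * d z) ^ 2 ∂ν = 3 / 4 * l ^ 2 * ∫ z, d z ^ 2 ∂ν := by
          have e5 : ∫ z, 3 / 4 * (l * d z) ^ 2 ∂ν =
              ∫ z, 3 / 4 * l ^ 2 * d z ^ 2 ∂ν :=
            integral_congr_ae (ae_of_all _ fun z =>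
              show 3 / 4 * (l * d z) ^ 2 = 3 / 4 * l ^ 2 * d z ^ 2 by ring)
          rw [e5, integral_const_mul]
        rw [e1, e2, e3, e4, hdmean, integral_const]
        simp
      have hdsq : ∫ z, d z ^ 2 ∂ν ≤ L ^ 2 / 4 := by
        have hmono2 : ∫ z, d z ^ 2 ∂ν ≤ ∫ _z, (L / 2) ^ 2 ∂ν := by
          refine integral_mono_ae hdsqint (integrable_const ((L / 2) ^ 2)) ?_
          filter_upwards [hω] with z hz
          calc d z ^ 2 = |d z| ^ 2 := (sq_abs _).symm
            _ ≤ (L / 2) ^ 2 := pow_le_pow_left₀ (abs_nonneg _) hz 2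
        refine hmono2.trans ?_
        simp only [integral_const, measure_univ, ENNReal.toReal_one, probReal_univ, one_smul, smul_eq_mul]
        nlinarith
      calc ∫ z, Real.exp (l * d z) ∂ν ≤ 1 + 3 / 4 * l ^ 2 * ∫ z, d z ^ 2 ∂ν :=
            hmono.trans_eq hcalc
        _ ≤ 1 + 3 / 16 * l ^ 2 * L ^ 2 := by nlinarith [sq_nonneg l]
    calc ∫ z, Real.exp (l * Gk ν X ((j : ℕ) + 1) (Function.update ω j z)) ∂ν
        = ∫ z, Real.exp (l * Gk ν X (j : ℕ) ω) * Real.exp (l * d z) ∂ν := by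
          refine integral_congr_ae (ae_of_all _ fun z => ?_)
          show Real.exp (l * Gk ν X ((j : ℕ) + 1) (Function.update ω j z)) =
            Real.exp (l * Gk ν X (j : ℕ) ω) * Real.exp (l * d z)
          rw [← Real.exp_add]
          congr 1
          have : d z = Gk ν X ((j : ℕ) + 1) (Function.update ω j z) - Gk ν X (j : ℕ) ω := rfl
          rw [this]
          ring
      _ = Real.exp (l * Gk ν X (j : ℕ) ω) * ∫ z, Real.exp (l * d z) ∂ν :=
          integral_const_mul _ _
      _ ≤ Real.exp (l * Gk ν X (j : ℕ) ω) * (1 + 3 / 16 * l ^ 2 * L ^ 2) := by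
          exact mul_le_mul_of_nonneg_left key (le_of_lt (Real.exp_pos _))
      _ = (1 + 3 / 16 * l ^ 2 * L ^ 2) * Real.exp (l * Gk ν X (j : ℕ) ω) := by ring
  -- put it together
  have hLHS : ∫ ω, Real.exp (l * Gk ν X ((j : ℕ) + 1) ω) ∂(Measure.pi fun _ : Fin N => ν) =
      ∫ ω, ∫ z, Real.exp (l * Gk ν X ((j : ℕ) + 1) (Function.update ω j z)) ∂ν
        ∂(Measure.pi fun _ : Fin N => ν) := by
    rw [integral_update_eq ν j _ (hexp_meas _).aestronglyMeasurable]
    refine integral_prod _ ?_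
    refine integrable_of_bdd ?_ (c := Real.exp (l * |C|)) (fun q => hexp_bdd _ _)
    exact (Real.measurable_exp.comp
      (measurable_const.mul ((hGmeas _).comp measurable_update'))).aestronglyMeasurable
  rw [hLHS, ← integral_const_mul]
  refine integral_mono_ae ?_ ?_ hinner
  · have : Measurable fun ω => ∫ z,
        Real.exp (l * Gk ν X ((j : ℕ) + 1) (Function.update ω j z)) ∂ν :=
      (Real.measurable_exp.comp
        (measurable_const.mul ((hGmeas _).comp
          measurable_update'))).stronglyMeasurable.integral_prod_right'.measurable
    refine integrable_of_bdd this.aestronglyMeasurable (c := Real.exp (l * |C|)) fun ω => ?_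
    exact abs_integral_le ν (ae_of_all _ fun z => hexp_bdd _ _)
  · exact ((integrable_of_bdd (hexp_meas _).aestronglyMeasurable
      (fun ω => hexp_bdd _ _)).const_mul _)


lemma mgf_le (hL : 0 < L) {l : ℝ} (hl : 0 ≤ l) (hlL : l * L ≤ 2)
    (hmean : ∫ ω, X ω ∂(Measure.pi fun _ : Fin N => ν) = 0)
    (hdiff : ∀ j : Fin N, ∀ᵐ ω ∂(Measure.pi fun _ : Fin N => ν),
      |Gk ν X ((j : ℕ) + 1) ω - Gk ν X (j : ℕ) ω| ≤ L / 2) :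
    ∫ ω, Real.exp (l * X ω) ∂(Measure.pi fun _ : Fin N => ν) ≤
      Real.exp (3 / 16 * l ^ 2 * L ^ 2 * N) := by
  have hK : (0 : ℝ) ≤ 1 + 3 / 16 * l ^ 2 * L ^ 2 := by positivity
  have hstep : ∀ k : ℕ, k ≤ N →
      ∫ ω, Real.exp (l * Gk ν X k ω) ∂(Measure.pi fun _ : Fin N => ν) ≤
        (1 + 3 / 16 * l ^ 2 * L ^ 2) ^ k := by
    intro k
    induction k with
    | zero =>
      intro _
      have h0 : ∀ ω : Fin N → E, Real.exp (l * Gk ν X 0 ω) = 1 := fun ω => by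
        rw [Gk_zero, hmean, mul_zero, Real.exp_zero]
      simp only [h0, pow_zero]
      simp
    | succ k ih =>
      intro hk1
      have hkN : k < N := hk1
      calc ∫ ω, Real.exp (l * Gk ν X (k + 1) ω) ∂(Measure.pi fun _ : Fin N => ν)
          ≤ (1 + 3 / 16 * l ^ 2 * L ^ 2) *
              ∫ ω, Real.exp (l * Gk ν X k ω) ∂(Measure.pi fun _ : Fin N => ν) :=
            step_exp ν hmeas hbdd ⟨k, hkN⟩ hl hlL hL (hdiff ⟨k, hkN⟩)
        _ ≤ (1 + 3 / 16 * l ^ 2 * L ^ 2) * (1 + 3 / 16 * l ^ 2 * L ^ 2) ^ k :=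
            mul_le_mul_of_nonneg_left (ih (Nat.le_of_lt hkN)) hK
        _ = (1 + 3 / 16 * l ^ 2 * L ^ 2) ^ (k + 1) := by ring
  have hXG := hstep N le_rfl
  have hre : ∫ ω, Real.exp (l * X ω) ∂(Measure.pi fun _ : Fin N => ν) =
      ∫ ω, Real.exp (l * Gk ν X N ω) ∂(Measure.pi fun _ : Fin N => ν) :=
    integral_congr_ae (ae_of_all _ fun ω => by
      show Real.exp (l * X ω) = Real.exp (l * Gk ν X N ω)
      rw [Gk_N])
  rw [hre]
  refine hXG.trans ?_
  calc (1 + 3 / 16 * l ^ 2 * L ^ 2) ^ N ≤ (Real.exp (3 / 16 * l ^ 2 * L ^ 2)) ^ N := by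
        refine pow_le_pow_left₀ hK ?_ N
        have := Real.add_one_le_exp (3 / 16 * l ^ 2 * L ^ 2)
        linarith
    _ = Real.exp (3 / 16 * l ^ 2 * L ^ 2 * N) := by
        rw [← Real.exp_nat_mul]
        congr 1
        ring

lemma ae_abs_X_le (hmean : ∫ ω, X ω ∂(Measure.pi fun _ : Fin N => ν) = 0)
    (hdiff : ∀ j : Fin N, ∀ᵐ ω ∂(Measure.pi fun _ : Fin N => ν),
      |Gk ν X ((j : ℕ) + 1) ω - Gk ν X (j : ℕ) ω| ≤ L / 2) :
    ∀ᵐ ω ∂(Measure.pi fun _ : Fin N => ν), |X ω| ≤ N * (L / 2) := by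
  have hall : ∀ᵐ ω ∂(Measure.pi fun _ : Fin N => ν), ∀ j : Fin N,
      |Gk ν X ((j : ℕ) + 1) ω - Gk ν X (j : ℕ) ω| ≤ L / 2 := ae_all_iff.2 hdiff
  filter_upwards [hall] with ω hω
  have htel : Gk ν X N ω - Gk ν X 0 ω =
      ∑ k ∈ Finset.range N, (Gk ν X (k + 1) ω - Gk ν X k ω) :=
    (Finset.sum_range_sub (fun k => Gk ν X k ω) N).symm
  have hX : X ω = Gk ν X N ω - Gk ν X 0 ω := by
    rw [Gk_N, Gk_zero, hmean, sub_zero]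
  rw [hX, htel]
  refine (Finset.abs_sum_le_sum_abs _ _).trans ?_
  have hterm : ∀ k ∈ Finset.range N, |Gk ν X (k + 1) ω - Gk ν X k ω| ≤ L / 2 := by
    intro k hk
    exact hω ⟨k, Finset.mem_range.1 hk⟩
  refine (Finset.sum_le_sum hterm).trans ?_
  rw [Finset.sum_const, Finset.card_range, nsmul_eq_mul]

end Main

end GlauberAux


open GlauberAux in
/-- Concentration estimate: if `X` is bounded and centered with Glauber derivatives
bounded by `L/2`, then `P[X > r] ≤ exp(-(r/(4L)) log(1 + r/(NL)))` for all `r > 0`;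
moreover this bound is at most `exp(-r²/(8NL²))` whenever `r ≤ NL`. -/
theorem glauber_concentration
    {E : Type*} [MeasurableSpace E] (ν : Measure E) [IsProbabilityMeasure ν] (N : ℕ)
    (X : (Fin N → E) → ℝ) (hmeas : Measurable X) (C : ℝ) (hbdd : ∀ ω, |X ω| ≤ C)
    (hmean : ∫ ω, X ω ∂(Measure.pi fun _ : Fin N => ν) = 0)
    (L : ℝ) (hL : 0 < L)
    (hD : ∀ j : Fin N,
      ∀ᵐ ω ∂(Measure.pi fun _ : Fin N => ν), |glauberD ν j X ω| ≤ L / 2) :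
    ∀ r : ℝ, 0 < r →
      (Measure.pi fun _ : Fin N => ν) {ω | r < X ω} ≤
          ENNReal.ofReal
            (Real.exp (-(r / (4 * L)) * Real.log (1 + r / ((N : ℝ) * L)))) ∧
        (r ≤ (N : ℝ) * L →
          Real.exp (-(r / (4 * L)) * Real.log (1 + r / ((N : ℝ) * L))) ≤
            Real.exp (-(r ^ 2) / (8 * (N : ℝ) * L ^ 2))) := by
  intro r hr
  have habs' : ∀ ω, |X ω| ≤ |C| := fun ω => (hbdd ω).trans (le_abs_self C)
  have hDc : ∀ j : Fin N, ∀ᵐ ω ∂(Measure.pi fun _ : Fin N => ν),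
      |X ω - gj ν X j ω| ≤ L / 2 := by
    intro j
    filter_upwards [hD j, condexp_glauber ν hmeas hbdd j] with ω h1 h2
    simp only [glauberD] at h1
    rwa [h2] at h1
  have hdiff : ∀ j : Fin N, ∀ᵐ ω ∂(Measure.pi fun _ : Fin N => ν),
      |Gk ν X ((j : ℕ) + 1) ω - Gk ν X (j : ℕ) ω| ≤ L / 2 := fun j =>
    abs_Gk_succ_sub ν hmeas habs' j hL (hDc j)
  constructor
  · -- the tail bound
    by_cases hcase : r ≤ (N : ℝ) * L
    · -- Chernoff regime
      have hN0 : 0 < N := by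
        rcases Nat.eq_zero_or_pos N with h | h
        · exfalso
          rw [h] at hcase
          simp at hcase
          linarith
        · exact h
      have hn : (0 : ℝ) < (N : ℝ) := Nat.cast_pos.2 hN0
      set l : ℝ := 2 * r / ((N : ℝ) * L ^ 2) with hl_def
      have hl : 0 ≤ l := by positivity
      have hlL : l * L ≤ 2 := by
        rw [hl_def]
        rw [div_mul_eq_mul_div, div_le_iff₀ (by positivity)]
        have : 2 * r * L ≤ 2 * ((N : ℝ) * L) * L := by nlinarith
        nlinarith
      have hmgf := mgf_le ν hmeas habs' hL hl hlL hmean hdiff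
      have hint : Integrable (fun ω => Real.exp (l * X ω)) (Measure.pi fun _ : Fin N => ν) := by
        refine integrable_of_bdd ((Real.measurable_exp.comp
          (measurable_const.mul hmeas)).aestronglyMeasurable)
          (c := Real.exp (l * |C|)) fun ω => ?_
        rw [abs_of_pos (Real.exp_pos _)]
        exact Real.exp_le_exp.2 ((mul_le_mul_of_nonneg_left (le_abs_self _) hl).trans
          (mul_le_mul_of_nonneg_left (habs' ω) hl))
      have hcher := ProbabilityTheory.measure_ge_le_exp_mul_mgf
        (μ := Measure.pi fun _ : Fin N => ν) (X := X) r hl hint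
      have hmgf_eq : ProbabilityTheory.mgf X (Measure.pi fun _ : Fin N => ν) l =
          ∫ ω, Real.exp (l * X ω) ∂(Measure.pi fun _ : Fin N => ν) := rfl
      rw [hmgf_eq] at hcher
      -- exponent comparison
      have hx0 : 0 < r / ((N : ℝ) * L) := by positivity
      have hlog : Real.log (1 + r / ((N : ℝ) * L)) ≤ r / ((N : ℝ) * L) := by
        have := Real.log_le_sub_one_of_pos (show (0:ℝ) < 1 + r / ((N : ℝ) * L) by linarith)
        linarith
      have hexpcomp : Real.exp (-l * r) * Real.exp (3 / 16 * l ^ 2 * L ^ 2 * N) ≤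
          Real.exp (-(r / (4 * L)) * Real.log (1 + r / ((N : ℝ) * L))) := by
        rw [← Real.exp_add, Real.exp_le_exp]
        have h1 : r / (4 * L) * Real.log (1 + r / ((N : ℝ) * L)) ≤
            r / (4 * L) * (r / ((N : ℝ) * L)) :=
          mul_le_mul_of_nonneg_left hlog (by positivity)
        have h2 : r / (4 * L) * (r / ((N : ℝ) * L)) = 1 / 4 * (r ^ 2 / ((N : ℝ) * L ^ 2)) := by
          field_simp
        have h3 : -l * r + 3 / 16 * l ^ 2 * L ^ 2 * N = -(5 / 4 * (r ^ 2 / ((N : ℝ) * L ^ 2))) := by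
          rw [hl_def]
          field_simp
          ring
        have h4 : (0:ℝ) ≤ r ^ 2 / ((N : ℝ) * L ^ 2) := by positivity
        nlinarith
      calc (Measure.pi fun _ : Fin N => ν) {ω | r < X ω}
          ≤ (Measure.pi fun _ : Fin N => ν) {ω | r ≤ X ω} :=
            measure_mono fun ω hω => by
              simp only [Set.mem_setOf_eq] at hω ⊢
              exact le_of_lt hω
        _ = ENNReal.ofReal (((Measure.pi fun _ : Fin N => ν) {ω | r ≤ X ω}).toReal) :=
            (ENNReal.ofReal_toReal (measure_ne_top _ _)).symm
        _ ≤ ENNReal.ofReal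
              (Real.exp (-(r / (4 * L)) * Real.log (1 + r / ((N : ℝ) * L)))) := by
            refine ENNReal.ofReal_le_ofReal ?_
            refine hcher.trans ?_
            refine (mul_le_mul_of_nonneg_left hmgf (le_of_lt (Real.exp_pos _))).trans hexpcomp
    · -- zero-measure regime
      push_neg at hcase
      have hNL0 : (0:ℝ) ≤ (N : ℝ) * L := by positivity
      have hae := ae_abs_X_le ν hmeas habs' hmean hdiff
      rw [ae_iff] at hae
      have hnull : (Measure.pi fun _ : Fin N => ν) {ω | r < X ω} = 0 := by
        refine measure_mono_null ?_ hae
        intro ω hω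
        simp only [Set.mem_setOf_eq] at hω ⊢
        have h1 := le_abs_self (X ω)
        intro hc
        have : (N : ℝ) * (L / 2) ≤ (N : ℝ) * L := by nlinarith
        linarith
      rw [hnull]
      exact zero_le
  · -- comparison of the two bounds
    intro hrNL
    have hN0 : 0 < N := by
      rcases Nat.eq_zero_or_pos N with h | h
      · exfalso
        rw [h] at hrNL
        simp at hrNL
        linarith
      · exact h
    have hn : (0 : ℝ) < (N : ℝ) := Nat.cast_pos.2 hN0
    set x : ℝ := r / ((N : ℝ) * L) with hx_def
    have hx0 : 0 < x := by positivity
    have hx1 : x ≤ 1 := by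
      rw [hx_def, div_le_one (by positivity)]
      exact hrNL
    have hlog2 : x / 2 ≤ Real.log (1 + x) := by
      rw [Real.le_log_iff_exp_le (by linarith)]
      have hb := Real.exp_bound' (x := x / 2) (by linarith) (by linarith) (n := 2) (by norm_num)
      have hs : ∑ m ∈ Finset.range 2, (x / 2) ^ m / (Nat.factorial m) = 1 + x / 2 := by
        simp [Finset.sum_range_succ]
      rw [hs] at hb
      norm_num at hb
      nlinarith
    rw [Real.exp_le_exp]
    have h1 : r / (4 * L) * (x / 2) ≤ r / (4 * L) * Real.log (1 + x) :=
      mul_le_mul_of_nonneg_left hlog2 (by positivity)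
    have h2 : r / (4 * L) * (x / 2) = r ^ 2 / (8 * (N : ℝ) * L ^ 2) := by
      rw [hx_def]
      field_simp
      ring
    have : -(r ^ 2) / (8 * (N : ℝ) * L ^ 2) = -(r ^ 2 / (8 * (N : ℝ) * L ^ 2)) := by ring
    rw [this]
    linarith
end
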